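/- arXiv:math/0601362 — 5 statements merged into one kernel-verified Lean document; each statement's English description precedes it below -/
import Mathlib

section
/- Determinant cross ratios satisfy e_{𝐢;j,k,t,s} = 1 − (1 − e_{𝐢;j,k,r,s})/(1 − e_{𝐢;j,k,r,t}) on ℰⁿ(ℂ^m,gp), for distinct indices i_1,...,i_{m-1},j,k,r,s,t. -/
/-- The affine determinant `d_{a_1,...,a_{m+1}}(q)`: the determinant of the
`(m+1)×(m+1)` matrix whose `r`-th row is `(q_{a_r}, 1)`, for points `q_i ∈ ℂ^m`. -/
noncomputable def dA {n m : ℕ} (q : Fin n → Fin m → ℂ) (a : Fin (m + 1) → Fin n) : ℂ :=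
  (Matrix.of (fun r c : Fin (m + 1) => Fin.snoc (q (a r)) (1 : ℂ) c)).det

/-- `q ∈ ℰⁿ(ℂ^m, gp)`: no `m+1` of the points lie on an affine hyperplane. -/
def GenPos {n m : ℕ} (q : Fin n → Fin m → ℂ) : Prop :=
  ∀ a : Fin (m + 1) → Fin n, Function.Injective a → dA q a ≠ 0

/-- The determinant cross ratio `e_{𝐢;j,k,l,s}` (here the paper's `m` is `M + 1`,
so `𝐢` has `m - 1 = M` entries and points lie in `ℂ^{M+1}`). -/
noncomputable def ecr {n M : ℕ} (q : Fin n → Fin (M + 1) → ℂ) (i : Fin M → Fin n)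
    (j k l s : Fin n) : ℂ :=
  (dA q (Fin.snoc (Fin.snoc i j) k) * dA q (Fin.snoc (Fin.snoc i l) s)) /
  (dA q (Fin.snoc (Fin.snoc i j) l) * dA q (Fin.snoc (Fin.snoc i k) s))

/-!
Fix the points `q_𝐢` and write `D x y = d_{𝐢,x,y}(q)`. Lifting points to `(q_x, 1) ∈ ℂ^{m+1}`,
`D` is the determinant with all but two rows frozen, and it satisfies the three-term Plücker
relation `D j k · D l s - D j l · D k s + D j s · D k l = 0`: as a linear form in `j` the left side
vanishes on the rows `𝐢, k, l`, which form a basis when `D k l ≠ 0`. The relation says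
`1 - e_{𝐢;j,k,l,s} = D j s · D k l / (D j l · D k s)`, and the identity follows by comparing the
instances `(l, s) = (r, s), (r, t), (t, s)` of this formula.
-/

open Function Module

namespace AlternatingMap

variable {K V : Type*} [Field K] [AddCommGroup V] [Module K V] {N : ℕ}
  (f : V [⋀^Fin (N + 2)]→ₗ[K] K) (u : Fin N → V)

theorem map_snoc_snoc_self (x : V) : f (Fin.snoc (Fin.snoc u x) x) = 0 :=
  f.map_eq_zero_of_eq _ (i := (Fin.last N).castSucc) (j := Fin.last (N + 1)) (by simp)
    (Fin.castSucc_lt_last _).ne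

theorem map_snoc_snoc_of_mem_range {x : V} (hx : x ∈ Set.range u) (y : V) :
    f (Fin.snoc (Fin.snoc u x) y) = 0 := by
  obtain ⟨p, rfl⟩ := hx
  exact f.map_eq_zero_of_eq _ (i := p.castSucc.castSucc) (j := (Fin.last N).castSucc) (by simp)
    (by simp [Fin.ext_iff, p.isLt.ne])

theorem map_snoc_snoc_swap (x y : V) :
    f (Fin.snoc (Fin.snoc u y) x) = -f (Fin.snoc (Fin.snoc u x) y) := by
  rw [← f.map_swap _ (Fin.castSucc_lt_last (Fin.last N)).ne]
  congr 1
  ext p : 1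
  induction p using Fin.lastCases with
  | last => simp
  | cast p =>
    induction p using Fin.lastCases with
    | last => simp
    | cast p =>
      rw [comp_apply, Equiv.swap_apply_of_ne_of_ne (by simp [Fin.ext_iff, p.isLt.ne])
        (by simp [Fin.ext_iff]; omega)]
      simp

theorem map_snoc_snoc_eq_toLinearMap (x y : V) :
    f (Fin.snoc (Fin.snoc u x) y) =
      f.toMultilinearMap.toLinearMap (Fin.snoc (Fin.snoc u 0) y) (Fin.last N).castSucc x := by
  rw [MultilinearMap.toLinearMap_apply, ← Fin.snoc_update, Fin.update_snoc_last]
  rfl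

theorem plucker_snoc_snoc (hV : finrank K V = N + 2) (a b c d : V)
    (hbc : f (Fin.snoc (Fin.snoc u b) c) ≠ 0) :
    f (Fin.snoc (Fin.snoc u a) b) * f (Fin.snoc (Fin.snoc u c) d)
      - f (Fin.snoc (Fin.snoc u a) c) * f (Fin.snoc (Fin.snoc u b) d)
      + f (Fin.snoc (Fin.snoc u a) d) * f (Fin.snoc (Fin.snoc u b) c) = 0 := by
  classical
  set B : V → V → K := fun x y => f (Fin.snoc (Fin.snoc u x) y) with hB
  set φ : V → V →ₗ[K] K := fun y =>
    f.toMultilinearMap.toLinearMap (Fin.snoc (Fin.snoc u 0) y) (Fin.last N).castSucc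
  have hφ : ∀ x y, φ y x = B x y := fun x y => (f.map_snoc_snoc_eq_toLinearMap u x y).symm
  have hspan : Submodule.span K (Set.range (Fin.snoc (Fin.snoc u b) c)) = ⊤ :=
    LinearIndependent.span_eq_top_of_card_eq_finrank
      (by_contra fun h => hbc (f.map_linearDependent _ h)) (by simp [hV])
  have hL : B c d • φ b - B b d • φ c + B b c • φ d = 0 := by
    refine LinearMap.ext_on_range hspan fun p => ?_
    simp only [LinearMap.add_apply, LinearMap.sub_apply, LinearMap.smul_apply, hφ, smul_eq_mul,
      LinearMap.zero_apply]
    induction p using Fin.lastCases with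
    | last => simp [hB, map_snoc_snoc_self, f.map_snoc_snoc_swap u b c]; ring
    | cast p =>
      induction p using Fin.lastCases with
      | last => simp [hB, map_snoc_snoc_self]; ring
      | cast p => simp [hB, f.map_snoc_snoc_of_mem_range u ⟨p, rfl⟩]
  have hLa := congrArg (· a) hL
  simp only [LinearMap.add_apply, LinearMap.sub_apply, LinearMap.smul_apply, hφ, smul_eq_mul,
    LinearMap.zero_apply] at hLa
  linear_combination hLa

end AlternatingMap

def homog {n m : ℕ} (q : Fin n → Fin m → ℂ) (z : Fin n) : Fin (m + 1) → ℂ :=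
  Fin.snoc (q z) 1

section

variable {n M : ℕ} (q : Fin n → Fin (M + 1) → ℂ) (i : Fin M → Fin n)

theorem dA_snoc_snoc (x y : Fin n) :
    dA q (Fin.snoc (Fin.snoc i x) y) =
      Matrix.detRowAlternating (Fin.snoc (Fin.snoc (homog q ∘ i) (homog q x)) (homog q y)) := by
  rw [← Fin.comp_snoc, ← Fin.comp_snoc, dA, Matrix.det]
  rfl

theorem dA_plucker (j k l s : Fin n) (hkl : dA q (Fin.snoc (Fin.snoc i k) l) ≠ 0) :
    dA q (Fin.snoc (Fin.snoc i j) k) * dA q (Fin.snoc (Fin.snoc i l) s)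
      - dA q (Fin.snoc (Fin.snoc i j) l) * dA q (Fin.snoc (Fin.snoc i k) s)
      + dA q (Fin.snoc (Fin.snoc i j) s) * dA q (Fin.snoc (Fin.snoc i k) l) = 0 := by
  simp only [dA_snoc_snoc] at hkl ⊢
  have hdim : finrank ℂ (Fin (M + 2) → ℂ) = M + 2 := by simp
  exact (AlternatingMap.plucker_snoc_snoc Matrix.detRowAlternating _ hdim _ _ _ _ hkl :)

theorem one_sub_ecr (j k l s : Fin n) (hjl : dA q (Fin.snoc (Fin.snoc i j) l) ≠ 0)
    (hks : dA q (Fin.snoc (Fin.snoc i k) s) ≠ 0) (hkl : dA q (Fin.snoc (Fin.snoc i k) l) ≠ 0) :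
    1 - ecr q i j k l s = dA q (Fin.snoc (Fin.snoc i j) s) * dA q (Fin.snoc (Fin.snoc i k) l) /
      (dA q (Fin.snoc (Fin.snoc i j) l) * dA q (Fin.snoc (Fin.snoc i k) s)) := by
  rw [ecr]
  field_simp
  linear_combination -dA_plucker q i j k l s hkl

end

theorem GenPos.dA_snoc_snoc_ne_zero {n M : ℕ} {q : Fin n → Fin (M + 1) → ℂ} (hq : GenPos q)
    {i : Fin M → Fin n} (hi : Injective i) {x y : Fin n} (hx : x ∉ Set.range i)
    (hy : y ∉ Set.range i) (hxy : x ≠ y) : dA q (Fin.snoc (Fin.snoc i x) y) ≠ 0 :=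
  hq _ (Fin.snoc_injective_of_injective (Fin.snoc_injective_of_injective hi hx)
    (by simp [hxy.symm, hy]))

theorem dcr_third_slot_relation_general {n M : ℕ}
    (q : Fin n → Fin (M + 1) → ℂ) (hq : GenPos q)
    (i : Fin M → Fin n) (j k r s t : Fin n)
    (hdist : Function.Injective
      (Fin.snoc (Fin.snoc (Fin.snoc (Fin.snoc (Fin.snoc i j) k) r) s) t :
        Fin (M + 5) → Fin n)) :
    ecr q i j k t s = 1 - (1 - ecr q i j k r s) / (1 - ecr q i j k r t) := by
  simp only [Fin.snoc_injective_iff, Fin.range_snoc, Set.mem_insert_iff, not_or] at hdist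
  obtain ⟨⟨⟨⟨⟨hi, hj⟩, -, hk⟩, hrk, hrj, hr⟩, -, hsk, -, hs⟩, -, -, htk, htj, ht⟩ := hdist
  have hjr := hq.dA_snoc_snoc_ne_zero hi hj hr (Ne.symm hrj)
  have hjt := hq.dA_snoc_snoc_ne_zero hi hj ht (Ne.symm htj)
  have hkr := hq.dA_snoc_snoc_ne_zero hi hk hr (Ne.symm hrk)
  have hks := hq.dA_snoc_snoc_ne_zero hi hk hs (Ne.symm hsk)
  have hkt := hq.dA_snoc_snoc_ne_zero hi hk ht (Ne.symm htk)
  have hquot : (1 - ecr q i j k r s) / (1 - ecr q i j k r t) = 1 - ecr q i j k t s := by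
    rw [one_sub_ecr q i j k r s hjr hks hkr, one_sub_ecr q i j k r t hjr hkt hkr,
      one_sub_ecr q i j k t s hjt hks hkt]
    field_simp
  rw [hquot, sub_sub_cancel]

/-- `e_{𝐢;j,k,t,s} = 1 − (1 − e_{𝐢;j,k,r,s})/(1 − e_{𝐢;j,k,r,t})` on `ℰⁿ(ℂ^m, gp)`,
for distinct indices `i_1,...,i_{m-1},j,k,r,s,t` (the paper's `m` is `M + 1`). -/
theorem dcr_third_slot_relation {n M : ℕ} (hn : M + 5 ≤ n)
    (q : Fin n → Fin (M + 1) → ℂ) (hq : GenPos q)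
    (i : Fin M → Fin n) (j k r s t : Fin n)
    (hdist : Function.Injective
      (Fin.snoc (Fin.snoc (Fin.snoc (Fin.snoc (Fin.snoc i j) k) r) s) t :
        Fin (M + 5) → Fin n)) :
    ecr q i j k t s = 1 - (1 - ecr q i j k r s) / (1 - ecr q i j k r t) :=
  dcr_third_slot_relation_general q hq i j k r s t hdist
end

section
/- For a multiindex 𝐣 = (j_1,...,j_{m-2}) and distinct further indices i,j,k,r,s, determinant cross ratios satisfy e_{𝐣,i;j,k,r,s} = e_{𝐣,j;i,k,r,s} · e_{𝐣,s;j,k,r,i} on ℰⁿ(ℂ^m,gp). -/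
lemma snoc_injective_iff {α : Type*} {m : ℕ} {x : Fin m → α} {a : α} :
    Function.Injective (Fin.snoc x a : Fin (m+1) → α) ↔
      Function.Injective x ∧ a ∉ Set.range x := by
  constructor
  · intro h
    refine ⟨fun p q hpq => ?_, ?_⟩
    · have h2 : (Fin.snoc x a : Fin (m+1) → α) p.castSucc
          = (Fin.snoc x a : Fin (m+1) → α) q.castSucc := by simpa using hpq
      exact Fin.castSucc_injective _ (h h2)
    · rintro ⟨y, hy⟩
      have h2 : (Fin.snoc x a : Fin (m+1) → α) y.castSucc
          = (Fin.snoc x a : Fin (m+1) → α) (Fin.last m) := by simpa using hy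
      have := h h2
      rw [Fin.ext_iff] at this
      simp at this
      omega
  · rintro ⟨hx, ha⟩ p q hpq
    rcases Fin.eq_castSucc_or_eq_last p with ⟨p', rfl⟩ | rfl <;>
      rcases Fin.eq_castSucc_or_eq_last q with ⟨q', rfl⟩ | rfl
    · simp only [Fin.snoc_castSucc] at hpq
      exact congrArg _ (hx hpq)
    · simp only [Fin.snoc_castSucc, Fin.snoc_last] at hpq
      exact absurd ⟨p', hpq⟩ ha
    · simp only [Fin.snoc_castSucc, Fin.snoc_last] at hpq
      exact absurd ⟨q', hpq.symm⟩ ha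
    · rfl

lemma range_snoc' {α : Type*} {m : ℕ} (v : Fin m → α) (a : α) :
    Set.range (Fin.snoc v a : Fin (m+1) → α) = Set.range v ∪ {a} := by
  ext x
  constructor
  · rintro ⟨y, rfl⟩
    rcases Fin.eq_castSucc_or_eq_last y with ⟨z, rfl⟩ | rfl <;> simp
  · rintro (⟨y, rfl⟩ | rfl)
    · exact ⟨y.castSucc, by simp⟩
    · exact ⟨Fin.last m, by simp⟩

lemma snoc3_swap01 {α : Type*} {m : ℕ} (v : Fin m → α) (a b c : α) :
    (Fin.snoc (Fin.snoc (Fin.snoc v a) b) c : Fin (m+3) → α) ∘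
      (Equiv.swap (Fin.castSucc (Fin.castSucc (Fin.last m))) (Fin.castSucc (Fin.last (m+1)))) =
    (Fin.snoc (Fin.snoc (Fin.snoc v b) a) c : Fin (m+3) → α) := by
  funext x
  simp only [Function.comp_apply, Equiv.swap_apply_def]
  split_ifs with h1 h2
  · subst h1; simp
  · subst h2; simp
  · rcases Fin.eq_castSucc_or_eq_last x with ⟨y, rfl⟩ | rfl
    · rcases Fin.eq_castSucc_or_eq_last y with ⟨z, rfl⟩ | rfl
      · rcases Fin.eq_castSucc_or_eq_last z with ⟨w, rfl⟩ | rfl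
        · simp
        · exact absurd rfl h1
      · exact absurd rfl h2
    · simp

lemma snoc3_swap02 {α : Type*} {m : ℕ} (v : Fin m → α) (a b c : α) :
    (Fin.snoc (Fin.snoc (Fin.snoc v a) b) c : Fin (m+3) → α) ∘
      (Equiv.swap (Fin.castSucc (Fin.castSucc (Fin.last m))) (Fin.last (m+2))) =
    (Fin.snoc (Fin.snoc (Fin.snoc v c) b) a : Fin (m+3) → α) := by
  funext x
  simp only [Function.comp_apply, Equiv.swap_apply_def]
  split_ifs with h1 h2
  · subst h1; simp
  · subst h2; simp
  · rcases Fin.eq_castSucc_or_eq_last x with ⟨y, rfl⟩ | rfl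
    · rcases Fin.eq_castSucc_or_eq_last y with ⟨z, rfl⟩ | rfl
      · rcases Fin.eq_castSucc_or_eq_last z with ⟨w, rfl⟩ | rfl
        · simp
        · exact absurd rfl h1
      · simp
    · exact absurd rfl h2

lemma dA_swap {n m : ℕ} (q : Fin n → Fin m → ℂ) (a : Fin (m+1) → Fin n)
    {p₁ p₂ : Fin (m+1)} (h : p₁ ≠ p₂) :
    dA q (a ∘ (Equiv.swap p₁ p₂)) = - dA q a := by
  unfold dA
  have h2 : (Matrix.of fun r c : Fin (m+1) => Fin.snoc (q ((a ∘ (Equiv.swap p₁ p₂)) r)) (1:ℂ) c)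
      = (Matrix.of fun r c : Fin (m+1) => Fin.snoc (q (a r)) (1:ℂ) c).submatrix
          (Equiv.swap p₁ p₂) id := rfl
  rw [h2, Matrix.det_permute, Equiv.Perm.sign_swap h]
  simp

lemma D_swap01 {n m : ℕ} (q : Fin n → Fin (m+2) → ℂ) (v : Fin m → Fin n) (a b c : Fin n) :
    dA q (Fin.snoc (Fin.snoc (Fin.snoc v b) a) c) =
      - dA q (Fin.snoc (Fin.snoc (Fin.snoc v a) b) c) := by
  rw [← snoc3_swap01 v a b c, dA_swap]
  intro h
  have := congrArg Fin.val h
  simp at this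

lemma D_swap02 {n m : ℕ} (q : Fin n → Fin (m+2) → ℂ) (v : Fin m → Fin n) (a b c : Fin n) :
    dA q (Fin.snoc (Fin.snoc (Fin.snoc v c) b) a) =
      - dA q (Fin.snoc (Fin.snoc (Fin.snoc v a) b) c) := by
  rw [← snoc3_swap02 v a b c, dA_swap]
  intro h
  have := congrArg Fin.val h
  simp at this

/-- For a multiindex `J` of `m − 2` indices and distinct further indices `i,j,k,r,s`:
`e_{J,i;j,k,r,s} = e_{J,j;i,k,r,s} · e_{J,s;j,k,r,i}` on `ℰⁿ(ℂ^m, gp)`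
(the paper's `m` is `M + 2`, so `J` has `m − 2 = M` entries). -/
theorem dcr_product_relation {n M : ℕ} (hn : M + 5 ≤ n)
    (q : Fin n → Fin (M + 2) → ℂ) (hq : GenPos q)
    (J : Fin M → Fin n) (i j k r s : Fin n)
    (hdist : Function.Injective
      (Fin.snoc (Fin.snoc (Fin.snoc (Fin.snoc (Fin.snoc J i) j) k) r) s :
        Fin (M + 5) → Fin n)) :
    ecr q (Fin.snoc J i) j k r s
      = ecr q (Fin.snoc J j) i k r s * ecr q (Fin.snoc J s) j k r i := by
  rw [snoc_injective_iff, snoc_injective_iff, snoc_injective_iff, snoc_injective_iff,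
    snoc_injective_iff] at hdist
  obtain ⟨⟨⟨⟨⟨hJ, hi⟩, hj⟩, hk⟩, hr⟩, hs⟩ := hdist
  simp only [range_snoc', Set.mem_union, Set.mem_singleton_iff, not_or] at hj hk hr hs
  obtain ⟨hjJ, hji⟩ := hj
  obtain ⟨⟨hkJ, hki⟩, hkj⟩ := hk
  obtain ⟨⟨⟨hrJ, hri⟩, hrj⟩, hrk⟩ := hr
  obtain ⟨⟨⟨⟨hsJ, hsi⟩, hsj⟩, hsk⟩, hsr⟩ := hs
  -- injectivity of any snoc³ J x y z with x,y,z distinct, not in range J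
  have inj3 : ∀ x y z : Fin n, x ∉ Set.range J → y ∉ Set.range J → z ∉ Set.range J →
      y ≠ x → z ≠ x → z ≠ y →
      Function.Injective (Fin.snoc (Fin.snoc (Fin.snoc J x) y) z : Fin (M+3) → Fin n) := by
    intro x y z hx hy hz hyx hzx hzy
    rw [snoc_injective_iff, snoc_injective_iff, snoc_injective_iff]
    refine ⟨⟨⟨hJ, hx⟩, ?_⟩, ?_⟩ <;>
      simp [range_snoc', hx, hy, hz, hyx, hzx, hzy]
  have hDijr : dA q (Fin.snoc (Fin.snoc (Fin.snoc J i) j) r) ≠ 0 :=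
    hq _ (inj3 i j r hi hjJ hrJ hji hri hrj)
  have hDiks : dA q (Fin.snoc (Fin.snoc (Fin.snoc J i) k) s) ≠ 0 :=
    hq _ (inj3 i k s hi hkJ hsJ hki hsi hsk)
  have hDjks : dA q (Fin.snoc (Fin.snoc (Fin.snoc J j) k) s) ≠ 0 :=
    hq _ (inj3 j k s hjJ hkJ hsJ hkj hsj hsk)
  have hDjrs : dA q (Fin.snoc (Fin.snoc (Fin.snoc J j) r) s) ≠ 0 :=
    hq _ (inj3 j r s hjJ hrJ hsJ hrj hsj hsr)
  unfold ecr
  rw [show dA q (Fin.snoc (Fin.snoc (Fin.snoc J j) i) k)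
        = - dA q (Fin.snoc (Fin.snoc (Fin.snoc J i) j) k) from D_swap01 q J i j k,
    show dA q (Fin.snoc (Fin.snoc (Fin.snoc J j) i) r)
        = - dA q (Fin.snoc (Fin.snoc (Fin.snoc J i) j) r) from D_swap01 q J i j r,
    show dA q (Fin.snoc (Fin.snoc (Fin.snoc J s) r) i)
        = - dA q (Fin.snoc (Fin.snoc (Fin.snoc J i) r) s) from D_swap02 q J i r s,
    show dA q (Fin.snoc (Fin.snoc (Fin.snoc J s) k) i)
        = - dA q (Fin.snoc (Fin.snoc (Fin.snoc J i) k) s) from D_swap02 q J i k s,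
    show dA q (Fin.snoc (Fin.snoc (Fin.snoc J s) j) k)
        = dA q (Fin.snoc (Fin.snoc (Fin.snoc J j) k) s) from by
      rw [D_swap02 q J k j s, D_swap01 q J j k s]; ring,
    show dA q (Fin.snoc (Fin.snoc (Fin.snoc J s) j) r)
        = dA q (Fin.snoc (Fin.snoc (Fin.snoc J j) r) s) from by
      rw [D_swap02 q J r j s, D_swap01 q J j r s]; ring]
  field_simp
end

section
/- For n ≥ m+3, the map P from the reduced configuration space M_{m,n} to (ℂ \ {0,1})^{m(n-m-2)} whose components are the determinant cross ratios p_{s,t}(q) = e_{𝐦(ŝ);s,m+1,m+2,t}(q), s = 1,...,m, t = m+3,...,n, is injective. -/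
/-- The projective determinant `d_{a_1,...,a_{m+1}}(q)` in homogeneous coordinates. -/
noncomputable def dP {n m : ℕ} (q : Fin n → Fin (m + 1) → ℂ) (a : Fin (m + 1) → Fin n) : ℂ :=
  (Matrix.of (fun r c : Fin (m + 1) => q (a r) c)).det

/-- Geometric genericity for points of `ℂℙ^m` in homogeneous coordinates. -/
def GenPosP {n m : ℕ} (q : Fin n → Fin (m + 1) → ℂ) : Prop :=
  ∀ a : Fin (m + 1) → Fin n, Function.Injective a → dP q a ≠ 0

/-- The determinant cross ratio `e_{𝐢;j,k,l,s}` on `ℰⁿ(ℂℙ^m, gp)` in homogeneous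
coordinates (the paper's `m` is `M + 1`, so `𝐢` has `M` entries). -/
noncomputable def ecrP {n M : ℕ} (q : Fin n → Fin (M + 2) → ℂ) (i : Fin M → Fin n)
    (j k l s : Fin n) : ℂ :=
  (dP q (Fin.snoc (Fin.snoc i j) k) * dP q (Fin.snoc (Fin.snoc i l) s)) /
  (dP q (Fin.snoc (Fin.snoc i j) l) * dP q (Fin.snoc (Fin.snoc i k) s))

/-- `q` lies in the reduced configuration space `M_{m,n}` (the paper's `m` is
`M + 1`, 0-indexed): `q_i` is the `i`-th standard coordinate point for
`i = 1,...,m+1` and `q_{m+2} = [1:⋯:1]`, the representatives being normalized. -/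
def InRedSpace {n M : ℕ} (hn : M + 4 ≤ n) (q : Fin n → Fin (M + 2) → ℂ) : Prop :=
  (∀ i : Fin (M + 2), q (Fin.castLE (by omega) i) = (Pi.single i 1 : Fin (M + 2) → ℂ)) ∧
  q ⟨M + 2, by omega⟩ = fun _ => (1 : ℂ)

/-!
On `M_{m,n}` the points `q_i`, `i ∈ 𝐦(ŝ)`, are coordinate points, so the determinant
`d_{𝐦(ŝ),j,k}` is a fixed nonzero constant times the `2 × 2` minor of `q_j, q_k` in the
coordinates `s` and `m + 1`. Evaluating the four minors gives `p_{s,t}(q) = 1 - z_{t,m+1}/z_{t,s}`,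
and genericity makes every coordinate of `q_t` nonzero. So `P(q)` determines all the ratios
`z_{t,s} / z_{t,m+1}`, that is, every point `q_t` of `ℂℙ^m`.
-/

namespace Matrix

variable {ι R : Type*} [Fintype ι] [DecidableEq ι] [CommRing R]

theorem det_eq_sum_mul_det_updateRow_single (A : Matrix ι ι R) (i : ι) :
    A.det = ∑ c, A i c * (A.updateRow i (Pi.single c 1)).det := by
  simp only [det_eq_sum_mul_adjugate_row A i, adjugate_apply]

theorem det_eq_sum_mul_det_updateRow_single_of_forall_notMem (A : Matrix ι ι R) (i : ι)
    (S : Finset ι) (hS : ∀ c ∉ S, ∃ k ≠ i, A k = Pi.single c 1) :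
    A.det = ∑ c ∈ S, A i c * (A.updateRow i (Pi.single c 1)).det := by
  rw [det_eq_sum_mul_det_updateRow_single A i]
  refine (Finset.sum_subset (Finset.subset_univ S) fun c _ hc => ?_).symm
  obtain ⟨k, hki, hk⟩ := hS c hc
  rw [det_zero_of_row_eq hki (by rw [updateRow_ne hki, updateRow_self, hk]), mul_zero]

end Matrix

namespace Fin

variable {α : Type*} {M : ℕ}

theorem snoc_snoc_comp_swap (E : Fin M → α) (x y : α) :
    snoc (snoc E x) y ∘ Equiv.swap (last M).castSucc (last (M + 1)) = snoc (snoc E y) x := by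
  funext k
  induction k using lastCases with
  | last => simp
  | cast k =>
    induction k using lastCases with
    | last => simp
    | cast r =>
      rw [Function.comp_apply, Equiv.swap_apply_of_ne_of_ne (by simp [Fin.ext_iff]; omega)
        (by simp [Fin.ext_iff]; omega)]
      simp

theorem snoc_snoc_injective {x : Fin M → α} {a b : α} (hx : Function.Injective x)
    (ha : a ∉ Set.range x) (hb : b ∉ Set.range x) (hab : a ≠ b) :
    Function.Injective (snoc (snoc x a) b) := by
  refine snoc_injective_of_injective (snoc_injective_of_injective hx ha) ?_
  rintro ⟨i, hi⟩
  induction i using lastCases with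
  | last => exact hab (by simpa using hi)
  | cast i => exact hb ⟨i, by simpa using hi⟩

theorem castLE_notMem_range_castLE_succAbove {n : ℕ} (h : M + 1 ≤ n) (s : Fin (M + 1)) :
    castLE h s ∉ Set.range fun r : Fin M => castLE h (s.succAbove r) := by
  rintro ⟨r, hr⟩
  exact s.succAbove_ne r (castLE_injective h hr)

theorem notMem_range_castLE_succAbove {n : ℕ} (h : M + 1 ≤ n) (s : Fin (M + 1)) {j : Fin n}
    (hj : M + 1 ≤ j.val) :
    j ∉ Set.range fun r : Fin M => castLE h (s.succAbove r) := by
  rintro ⟨r, rfl⟩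
  simp only [val_castLE] at hj
  omega

end Fin

section SnocSnoc

open Matrix

variable {M : ℕ}

theorem updateRow_of_snoc_snoc_castSucc_last {α : Type*} (E : Fin M → Fin (M + 2) → α)
    (u v w : Fin (M + 2) → α) :
    (of (Fin.snoc (Fin.snoc E u) v)).updateRow (Fin.last M).castSucc w
      = of (Fin.snoc (Fin.snoc E w) v) := by
  change of (Function.update (Fin.snoc (Fin.snoc E u) v) _ w) = _
  rw [← Fin.snoc_update, Fin.update_snoc_last]

theorem updateRow_of_snoc_snoc_last {α : Type*} (E : Fin M → Fin (M + 2) → α)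
    (u v w : Fin (M + 2) → α) :
    (of (Fin.snoc (Fin.snoc E u) v)).updateRow (Fin.last (M + 1)) w
      = of (Fin.snoc (Fin.snoc E u) w) := by
  change of (Function.update (Fin.snoc (Fin.snoc E u) v) _ w) = _
  rw [Fin.update_snoc_last]

variable {R : Type*} [CommRing R]

theorem det_of_snoc_snoc_self (E : Fin M → Fin (M + 2) → R) (x : Fin (M + 2) → R) :
    (of (Fin.snoc (Fin.snoc E x) x)).det = 0 :=
  det_zero_of_row_eq (Fin.castSucc_lt_last (Fin.last M)).ne (by ext; simp)

theorem det_of_snoc_snoc_swap (E : Fin M → Fin (M + 2) → R) (x y : Fin (M + 2) → R) :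
    (of (Fin.snoc (Fin.snoc E y) x)).det = -(of (Fin.snoc (Fin.snoc E x) y)).det := by
  rw [← Fin.snoc_snoc_comp_swap]
  exact detRowAlternating.map_swap (Fin.snoc (Fin.snoc E x) y) (Fin.castSucc_lt_last _).ne

variable {E : Fin M → Fin (M + 2) → R} {a b : Fin (M + 2)}

theorem det_of_snoc_snoc_eq_add_castSucc_last (hab : a ≠ b)
    (hE : ∀ c, c ≠ a → c ≠ b → ∃ r, E r = Pi.single c 1) (u v : Fin (M + 2) → R) :
    (of (Fin.snoc (Fin.snoc E u) v)).det
      = u a * (of (Fin.snoc (Fin.snoc E (Pi.single a 1)) v)).det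
        + u b * (of (Fin.snoc (Fin.snoc E (Pi.single b 1)) v)).det := by
  rw [det_eq_sum_mul_det_updateRow_single_of_forall_notMem _ (Fin.last M).castSucc {a, b},
    Finset.sum_pair hab]
  · simp [updateRow_of_snoc_snoc_castSucc_last]
  · intro c hc
    simp only [Finset.mem_insert, Finset.mem_singleton, not_or] at hc
    obtain ⟨r, hr⟩ := hE c hc.1 hc.2
    exact ⟨r.castSucc.castSucc, by simp [Fin.ext_iff]; omega, by ext; simpa using congrFun hr _⟩

theorem det_of_snoc_snoc_eq_add_last (hab : a ≠ b)
    (hE : ∀ c, c ≠ a → c ≠ b → ∃ r, E r = Pi.single c 1) (u v : Fin (M + 2) → R) :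
    (of (Fin.snoc (Fin.snoc E u) v)).det
      = v a * (of (Fin.snoc (Fin.snoc E u) (Pi.single a 1))).det
        + v b * (of (Fin.snoc (Fin.snoc E u) (Pi.single b 1))).det := by
  rw [det_eq_sum_mul_det_updateRow_single_of_forall_notMem _ (Fin.last (M + 1)) {a, b},
    Finset.sum_pair hab]
  · simp [updateRow_of_snoc_snoc_last]
  · intro c hc
    simp only [Finset.mem_insert, Finset.mem_singleton, not_or] at hc
    obtain ⟨r, hr⟩ := hE c hc.1 hc.2
    exact ⟨r.castSucc.castSucc, by simp [Fin.ext_iff]; omega, by ext; simpa using congrFun hr _⟩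

theorem det_of_snoc_snoc (hab : a ≠ b) (hE : ∀ c, c ≠ a → c ≠ b → ∃ r, E r = Pi.single c 1)
    (u v : Fin (M + 2) → R) :
    (of (Fin.snoc (Fin.snoc E u) v)).det
      = (u a * v b - u b * v a)
        * (of (Fin.snoc (Fin.snoc E (Pi.single a 1)) (Pi.single b 1))).det := by
  rw [det_of_snoc_snoc_eq_add_castSucc_last hab hE,
    det_of_snoc_snoc_eq_add_last hab hE (Pi.single a 1),
    det_of_snoc_snoc_eq_add_last hab hE (Pi.single b 1), det_of_snoc_snoc_self,
    det_of_snoc_snoc_self, det_of_snoc_snoc_swap E (Pi.single a 1)]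
  ring

end SnocSnoc

theorem GenPosP.dP_snoc_snoc_castLE_succAbove_ne_zero {n M : ℕ} {q : Fin n → Fin (M + 2) → ℂ}
    (hq : GenPosP q) (h : M + 1 ≤ n) (s : Fin (M + 1)) {j t : Fin n}
    (hj : j ∉ Set.range fun r : Fin M => Fin.castLE h (s.succAbove r))
    (hjt : j.val < t.val) (ht : M + 1 ≤ t.val) :
    dP q (Fin.snoc (Fin.snoc (fun r : Fin M => Fin.castLE h (s.succAbove r)) j) t) ≠ 0 :=
  hq _ (Fin.snoc_snoc_injective ((Fin.castLE_injective h).comp Fin.succAbove_right_injective)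
    hj (Fin.notMem_range_castLE_succAbove h s ht) (Fin.ne_of_lt hjt))

namespace InRedSpace

variable {n M : ℕ} {hn : M + 4 ≤ n} {q q' : Fin n → Fin (M + 2) → ℂ}

theorem apply_of_lt (hmem : InRedSpace hn q) (i : Fin n) (hi : i.val < M + 2) :
    q i = Pi.single ⟨i, hi⟩ 1 := by
  rw [← hmem.1 ⟨i, hi⟩]
  rfl

theorem apply_castLE (hmem : InRedSpace hn q) (h : M + 1 ≤ n) (s : Fin (M + 1)) :
    q (Fin.castLE h s) = Pi.single s.castSucc 1 :=
  hmem.apply_of_lt _ (by simp; omega)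

theorem apply_mk_add_one (hmem : InRedSpace hn q) (h : M + 1 < n) :
    q ⟨M + 1, h⟩ = Pi.single (Fin.last (M + 1)) 1 :=
  hmem.apply_of_lt _ (by simp)

theorem apply_eq_of_lt (hmem : InRedSpace hn q) (hmem' : InRedSpace hn q') (i : Fin n)
    (hi : i.val < M + 3) : q i = q' i := by
  rcases Nat.lt_succ_iff_lt_or_eq.mp hi with hi | hi
  · rw [hmem.apply_of_lt i hi, hmem'.apply_of_lt i hi]
  · rw [show i = ⟨M + 2, by omega⟩ from Fin.ext hi, hmem.2, hmem'.2]

theorem exists_dP_snoc_snoc (hmem : InRedSpace hn q) (h : M + 1 ≤ n) (s : Fin (M + 1)) :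
    ∃ ε : ℂ, ∀ j k : Fin n,
      dP q (Fin.snoc (Fin.snoc (fun r : Fin M => Fin.castLE h (s.succAbove r)) j) k)
        = (q j s.castSucc * q k (Fin.last (M + 1)) - q j (Fin.last (M + 1)) * q k s.castSucc)
          * ε := by
  set E : Fin M → Fin (M + 2) → ℂ := fun r => Pi.single (s.succAbove r).castSucc 1
  have hE : ∀ c, c ≠ s.castSucc → c ≠ Fin.last (M + 1) → ∃ r, E r = Pi.single c 1 := by
    intro c hcs hcl
    obtain ⟨c, rfl⟩ := Fin.exists_castSucc_eq.mpr hcl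
    obtain ⟨r, rfl⟩ := Fin.exists_succAbove_eq (fun h => hcs (congrArg _ h))
    exact ⟨r, rfl⟩
  have hrows : ∀ j k : Fin n, (Matrix.of fun r c => q ((Fin.snoc (Fin.snoc
      (fun r : Fin M => Fin.castLE h (s.succAbove r)) j) k : Fin (M + 2) → Fin n) r) c)
      = Matrix.of (Fin.snoc (Fin.snoc E (q j)) (q k)) := by
    have hqE : q ∘ (fun r : Fin M => Fin.castLE h (s.succAbove r)) = E :=
      funext fun r => hmem.apply_castLE h (s.succAbove r)
    intro j k
    rw [← hqE, ← Fin.comp_snoc, ← Fin.comp_snoc]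
    rfl
  exact ⟨_, fun j k => by
    rw [dP, hrows j k]
    exact det_of_snoc_snoc (Fin.castSucc_lt_last s).ne hE _ _⟩

theorem apply_ne_zero (hmem : InRedSpace hn q) (hq : GenPosP q) {t : Fin n}
    (ht : M + 3 ≤ t.val) (x : Fin (M + 2)) : q t x ≠ 0 := by
  induction x using Fin.lastCases with
  | last =>
    obtain ⟨ε, hε⟩ := hmem.exists_dP_snoc_snoc (by omega) 0
    have := hq.dP_snoc_snoc_castLE_succAbove_ne_zero (by omega) 0 (t := t)
      (Fin.castLE_notMem_range_castLE_succAbove _ _) (by simp; omega) (by omega)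
    rw [hε, hmem.apply_castLE] at this
    simpa [(Fin.castSucc_lt_last _).ne'] using left_ne_zero_of_mul this
  | cast s =>
    obtain ⟨ε, hε⟩ := hmem.exists_dP_snoc_snoc (by omega) s
    have := hq.dP_snoc_snoc_castLE_succAbove_ne_zero (by omega) s (j := ⟨M + 1, by omega⟩)
      (t := t) (Fin.notMem_range_castLE_succAbove _ _ le_rfl) (by simp; omega) (by omega)
    rw [hε, hmem.apply_mk_add_one] at this
    simpa [(Fin.castSucc_lt_last _).ne] using left_ne_zero_of_mul this

theorem ecrP_eq_one_sub_div (hmem : InRedSpace hn q) (hq : GenPosP q) (h : M + 1 ≤ n)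
    (s : Fin (M + 1)) {t : Fin n} (ht : M + 3 ≤ t.val) :
    ecrP q (fun r : Fin M => Fin.castLE h (s.succAbove r)) (Fin.castLE h s) ⟨M + 1, by omega⟩
        ⟨M + 2, by omega⟩ t
      = 1 - q t (Fin.last (M + 1)) / q t s.castSucc := by
  obtain ⟨ε, hε⟩ := hmem.exists_dP_snoc_snoc h s
  have hε0 : ε ≠ 0 := by
    have := hq.dP_snoc_snoc_castLE_succAbove_ne_zero h s (t := ⟨M + 1, by omega⟩)
      (Fin.castLE_notMem_range_castLE_succAbove _ _) (by simp; omega) le_rfl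
    rw [hε, hmem.apply_castLE, hmem.apply_mk_add_one] at this
    simpa [(Fin.castSucc_lt_last _).ne, (Fin.castSucc_lt_last _).ne'] using this
  have hz := hmem.apply_ne_zero hq ht s.castSucc
  rw [ecrP, hε, hε, hε, hε, hmem.apply_castLE, hmem.apply_mk_add_one, hmem.2]
  simp only [Pi.single_eq_same, Pi.single_eq_of_ne (Fin.castSucc_lt_last _).ne,
    Pi.single_eq_of_ne (Fin.castSucc_lt_last _).ne', mul_one, mul_zero, one_mul, zero_mul,
    sub_zero, zero_sub, neg_mul, mul_neg]
  field_simp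
  ring

end InRedSpace

/-- The paper's `m` is `M + 1`; indices are 0-based, `𝐦(ŝ)` is `s.succAbove`, and
injectivity is projective equality of the configurations. -/
theorem reduced_space_embedding_injective {n M : ℕ} (hn : M + 4 ≤ n)
    (q q' : Fin n → Fin (M + 2) → ℂ) (hq : GenPosP q) (hq' : GenPosP q')
    (hmem : InRedSpace hn q) (hmem' : InRedSpace hn q')
    (heq : ∀ (s : Fin (M + 1)) (t : Fin n), M + 3 ≤ t.val →
      ecrP q (fun r : Fin M => Fin.castLE (by omega) (s.succAbove r))
          (Fin.castLE (by omega) s) ⟨M + 1, by omega⟩ ⟨M + 2, by omega⟩ t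
        = ecrP q' (fun r : Fin M => Fin.castLE (by omega) (s.succAbove r))
          (Fin.castLE (by omega) s) ⟨M + 1, by omega⟩ ⟨M + 2, by omega⟩ t) :
    ∀ a : Fin n, ∃ c : ℂˣ, q a = (c : ℂ) • q' a := by
  intro t
  rcases lt_or_ge t.val (M + 3) with ht | ht
  · exact ⟨1, by rw [Units.val_one, one_smul, hmem.apply_eq_of_lt hmem' t ht]⟩
  have hz := hmem.apply_ne_zero hq ht
  have hz' := hmem'.apply_ne_zero hq' ht
  have hratio : ∀ s : Fin (M + 1), q t (Fin.last (M + 1)) / q t s.castSucc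
      = q' t (Fin.last (M + 1)) / q' t s.castSucc := fun s => by
    have := heq s t ht
    rwa [hmem.ecrP_eq_one_sub_div hq _ s ht, hmem'.ecrP_eq_one_sub_div hq' _ s ht,
      sub_right_inj] at this
  refine ⟨Units.mk0 _ (div_ne_zero (hz (Fin.last _)) (hz' (Fin.last _))), funext fun x => ?_⟩
  rw [Pi.smul_apply, smul_eq_mul, Units.val_mk0]
  induction x using Fin.lastCases with
  | last => field_simp [hz' (Fin.last _)]
  | cast s =>
    have := hratio s
    field_simp [hz, hz'] at this ⊢
    linear_combination -this
end

section
/- Let m > 1, i_0 ∈ {1,...,n}, 𝐢₀ = (i_1,...,i_m) distinct indices not containing i_0, and let L ⊂ ℂ^{mn} be the linear subspace defined by z_{i_1,2} = z_{i_2,2} = ... = z_{i_m,2}. For a multiindex 𝐢 of m+1 distinct indices avoiding i_0, the restriction of the determinant polynomial d_𝐢 to L is reducible if and only if 𝐢 contains all of i_1,...,i_m; and in that case d_𝐢|_L = ± D·(z_{i,2} − z_{i_1,2}) where i is the unique element of 𝐢 not among i_1,...,i_m and D is a minor polynomial. Moreover deg(d_𝐢|_L) = m for all such 𝐢. -/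
open MvPolynomial

/-- The `(m+1)×(m+1)` matrix of variables with rows `(z_{i_r,1},...,z_{i_r,m},1)`
for a multiindex `i` of `m + 1 = K + 3` indices (the paper's `m` is `K + 2 > 1`). -/
noncomputable def rowMatrix {n K : ℕ} (i : Fin (K + 3) → Fin n) :
    Matrix (Fin (K + 3)) (Fin (K + 3)) (MvPolynomial (Fin n × Fin (K + 2)) ℂ) :=
  Matrix.of fun r c =>
    (Fin.snoc (fun j : Fin (K + 2) => X (i r, j)) 1 :
      Fin (K + 3) → MvPolynomial (Fin n × Fin (K + 2)) ℂ) c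

/-- Restriction to the linear subspace `L ⊂ ℂ^{mn}` defined by
`z_{i_1,2} = ⋯ = z_{i_m,2}`: each variable `z_{i_t,2}` is renamed to `z_{i_1,2}`
(columns 0-indexed, so the second column is column `1`). -/
noncomputable def restrictL {n K : ℕ} (i₀ : Fin (K + 2) → Fin n) :
    MvPolynomial (Fin n × Fin (K + 2)) ℂ →ₐ[ℂ] MvPolynomial (Fin n × Fin (K + 2)) ℂ :=
  rename fun p =>
    if (∃ t, i₀ t = p.1) ∧ p.2 = (⟨1, by omega⟩ : Fin (K + 2)) then (i₀ 0, p.2) else p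

/-- The minor of `rowMatrix i` complementary to the entry `z_{ii r₀, 2}`
(delete row `r₀` and the second column). -/
noncomputable def complMinor {n K : ℕ} (i : Fin (K + 3) → Fin n) (r₀ : Fin (K + 3)) :
    MvPolynomial (Fin n × Fin (K + 2)) ℂ :=
  (Matrix.of fun r c : Fin (K + 2) =>
    rowMatrix i (r₀.succAbove r) ((⟨1, by omega⟩ : Fin (K + 3)).succAbove c)).det

open scoped Finset

/-!
After restriction to `L`, `d_𝐢` is the determinant `d(v)` of a matrix with rows
`(x_{v r 0}, …, x_{v r s}, 1)` whose variables `x_{v r j}` are pairwise distinct, except that the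
second-column entries of the rows indexed by `i_1, …, i_m` all become `z_{i_1,2}`.

Such a determinant with at most `s` identified rows is irreducible, by induction on `s`. Expanding
along another column `c` gives `∑_r ± M_r x_{v r c}`, linear in distinct variables that occur in
no minor `M_r`. The minor `M_{rs}` of an identified row is irreducible by induction, and it does
not divide the minor `M_{rq}` of a non-identified row `rq`: the second-column variable of row `rq`
occurs in `M_{rs}` but not in `M_{rq}`. Since a divisor free of the `x_{v r c}` divides every
coefficient `± M_r` (substitute `0` and `1` for these variables), the expansion is irreducible.

If all of `i_1, …, i_m` occur in `𝐢`, every row but one is identified; as the signed minors of a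
column sum to zero (they expand a determinant with two columns of ones), the expansion along the
second column collapses to `± D · (z_{i,2} - z_{i_1,2})`, a product of two non-units.

The degree is `m` in all cases: the monomial of a permutation that picks a non-identified entry
of the second column comes from that permutation only, so its coefficient is `±1`.
-/

namespace MvPolynomial

variable {R σ : Type*} [CommRing R]

theorem aeval_eq_self_of_forall_mem_vars {f : σ → MvPolynomial σ R} {p : MvPolynomial σ R}
    (h : ∀ i ∈ p.vars, f i = X i) : aeval f p = p := by
  change (aeval f).toRingHom p = RingHom.id _ p
  exact hom_congr_vars (by ext; simp) (fun i hi _ => by simpa using h i hi) rfl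

theorem dvd_of_dvd_sum_mul_X [DecidableEq σ] {ι : Type*} {S : Finset ι}
    {g : ι → MvPolynomial σ R} {u : ι → σ} {p : MvPolynomial σ R} (hu : Set.InjOn u S)
    (hg : ∀ r ∈ S, ∀ r' ∈ S, u r ∉ (g r').vars) (hp : ∀ r ∈ S, u r ∉ p.vars)
    (h : p ∣ ∑ r ∈ S, g r * X (u r)) {r : ι} (hr : r ∈ S) : p ∣ g r := by
  -- substitute `1` for `u r` and `0` for the other `u r'`
  set f : σ → MvPolynomial σ R := fun i => if i = u r then 1 else if i ∈ S.image u then 0 else X i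
  have hfix : ∀ q : MvPolynomial σ R, (∀ r' ∈ S, u r' ∉ q.vars) → aeval f q = q := by
    refine fun q hq => aeval_eq_self_of_forall_mem_vars fun i hi => ?_
    have hiS : i ∉ S.image u := by
      simp only [Finset.mem_image, not_exists, not_and]
      exact fun r' hr' he => hq r' hr' (he ▸ hi)
    have hir : i ≠ u r := fun he => hiS (he ▸ Finset.mem_image_of_mem u hr)
    simp only [f, if_neg hir, if_neg hiS]
  have hsum : aeval f (∑ r' ∈ S, g r' * X (u r')) = g r := by
    rw [map_sum, Finset.sum_eq_single r]
    · rw [map_mul, aeval_X, hfix _ (hg · · r hr)]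
      simp [f]
    · intro r' hr' hne
      have : u r' ≠ u r := fun he => hne (hu hr' hr he)
      have hf : f (u r') = 0 := by
        simp only [f, if_neg this, if_pos (Finset.mem_image_of_mem u hr')]
      rw [map_mul, aeval_X, hf, mul_zero]
    · exact fun h => absurd hr h
  simpa only [hfix p hp, hsum] using map_dvd (aeval f) h

theorem vars_subset_of_dvd [IsDomain R] {p q : MvPolynomial σ R} (hq : q ≠ 0) (h : p ∣ q) :
    p.vars ⊆ q.vars := by
  obtain ⟨c, rfl⟩ := h
  intro i hi
  rw [mem_vars_iff_degreeOf_ne_zero] at hi ⊢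
  rw [degreeOf_mul_eq (left_ne_zero_of_mul hq) (right_ne_zero_of_mul hq)]
  omega

theorem notMem_vars_sum_mul_X [Nontrivial R] [DecidableEq σ] {ι : Type*} (S : Finset ι)
    (g : ι → MvPolynomial σ R) (u : ι → σ) {x : σ} (hg : ∀ r ∈ S, x ∉ (g r).vars)
    (hu : ∀ r ∈ S, u r ≠ x) : x ∉ (∑ r ∈ S, g r * X (u r)).vars := by
  intro hx
  obtain ⟨r, hr, hx⟩ := Finset.mem_biUnion.mp (vars_sum_subset S _ hx)
  rcases Finset.mem_union.mp (vars_mul _ _ hx) with h | h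
  · exact hg r hr h
  · rw [vars_X, Finset.mem_singleton] at h
    exact hu r hr h.symm

theorem vars_neg_one_pow_mul (e : ℕ) (p : MvPolynomial σ R) : ((-1) ^ e * p).vars = p.vars := by
  rcases neg_one_pow_eq_or (MvPolynomial σ R) e with h | h <;> simp [h]

theorem irreducible_X_sub_X [IsDomain R] {a b : σ} (h : a ≠ b) :
    Irreducible (X a - X b : MvPolynomial σ R) := by
  classical
  rw [sub_eq_add_neg, ← one_mul (X a)]
  exact irreducible_mul_X_add _ _ _ one_ne_zero (by simp) (by simpa using h) isRelPrime_one_left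

end MvPolynomial

section Counting

theorem Fin.card_filter_succAbove_add {n : ℕ} (p : Fin (n + 1) → Prop) [DecidablePred p]
    (r : Fin (n + 1)) :
    #{a | p (r.succAbove a)} + (if p r then 1 else 0) = #(Finset.univ.filter p) := by
  simp only [Finset.card_filter]
  rw [Fin.sum_univ_succAbove _ r, add_comm]

theorem Fin.exists_rows_of_card_filter_le {s : ℕ} (p : Fin (s + 3) → Prop) [DecidablePred p]
    (hp : #(Finset.univ.filter p) ≤ s + 1) : ∃ rs rq rq' : Fin (s + 3),
      rq ≠ rs ∧ rq' ≠ rq ∧ ¬ p rq ∧ ¬ p rq' ∧ #{a | p (rs.succAbove a)} ≤ s := by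
  have h2 : 1 < #{r | ¬ p r} := by
    have := Finset.card_filter_add_card_filter_not (s := Finset.univ) p
    rw [Finset.card_univ, Fintype.card_fin] at this
    omega
  obtain ⟨rq, rq', hq, hq', hne⟩ := Finset.one_lt_card_iff.mp h2
  rw [Finset.mem_filter] at hq hq'
  by_cases hY : ∃ r, p r
  · obtain ⟨rs, hrs⟩ := hY
    refine ⟨rs, rq, rq', fun h => hq.2 (h ▸ hrs), hne.symm, hq.2, hq'.2, ?_⟩
    have := Fin.card_filter_succAbove_add p rs
    rw [if_pos hrs] at this
    omega
  · push Not at hY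
    refine ⟨rq', rq, rq', hne, hne.symm, hq.2, hq'.2, ?_⟩
    simp [hY]

theorem Finset.card_filter_exists_eq_le {α β γ : Type*} [Fintype α] [Fintype β] [DecidableEq γ]
    {f : α → γ} {g : β → γ} [DecidablePred fun a => ∃ b, g b = f a]
    [DecidablePred fun b => ∃ a, f a = g b] (hf : f.Injective) :
    #{a | ∃ b, g b = f a} ≤ #{b | ∃ a, f a = g b} := by
  classical
  calc #{a | ∃ b, g b = f a} = #(({a | ∃ b, g b = f a} : Finset α).image f) :=
        (Finset.card_image_of_injective _ hf).symm
    _ ≤ #(({b | ∃ a, f a = g b} : Finset β).image g) := Finset.card_le_card fun x hx => by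
        simp only [Finset.mem_image, Finset.mem_filter, Finset.mem_univ, true_and] at hx ⊢
        obtain ⟨a, ⟨b, hb⟩, rfl⟩ := hx
        exact ⟨b, ⟨a, hb.symm⟩, hb⟩
    _ ≤ #{b | ∃ a, f a = g b} := Finset.card_image_le

variable {α : Type*} {K : ℕ} {f : Fin (K + 2) → α} {g : Fin (K + 3) → α}

theorem Fin.exists_forall_ne_of_injective (hg : g.Injective) : ∃ r, ∀ t, f t ≠ g r := by
  classical
  by_contra! h
  have hle := (Finset.card_filter_exists_eq_le (g := f) hg).trans (Finset.card_filter_le _ _)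
  rw [Finset.filter_true_of_mem fun r _ => h r] at hle
  simp at hle

theorem Fin.exists_eq_of_forall_exists_of_ne (hf : f.Injective) (hcov : ∀ t, ∃ r, g r = f t)
    {r₀ : Fin (K + 3)} (hr₀ : ∀ t, f t ≠ g r₀) {r : Fin (K + 3)} (hr : r ≠ r₀) :
    ∃ t, f t = g r := by
  classical
  have hle := Finset.card_filter_exists_eq_le (g := g) hf
  rw [Finset.filter_true_of_mem fun t _ => hcov t, Finset.card_univ, Fintype.card_fin] at hle
  have hsub : ({r | ∃ t, f t = g r} : Finset _) ⊆ Finset.univ.erase r₀ := fun r' hr' =>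
    Finset.mem_erase.mpr ⟨by rintro rfl; simp [hr₀] at hr', Finset.mem_univ _⟩
  have heq := Finset.eq_of_subset_of_card_le hsub (by simpa using hle)
  have hmem : r ∈ Finset.univ.erase r₀ := Finset.mem_erase.mpr ⟨hr, Finset.mem_univ r⟩
  rw [← heq, Finset.mem_filter] at hmem
  exact hmem.2

theorem Fin.card_filter_exists_eq_le_of_forall_ne [DecidableEq α] (hg : g.Injective)
    {t₀ : Fin (K + 2)} (ht₀ : ∀ r, g r ≠ f t₀) : #{r | ∃ t, f t = g r} ≤ K + 1 := by
  refine (Finset.card_filter_exists_eq_le hg).trans ?_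
  calc _ ≤ #(Finset.univ.erase t₀) := Finset.card_le_card fun t ht =>
        Finset.mem_erase.mpr ⟨by rintro rfl; simp [ht₀] at ht, Finset.mem_univ _⟩
    _ = K + 1 := by simp

end Counting

section AffineMatrix

variable (R : Type*) [CommRing R] {σ : Type*} {s : ℕ}

noncomputable def affineMatrix (v : Matrix (Fin (s + 2)) (Fin (s + 1)) σ) :
    Matrix (Fin (s + 2)) (Fin (s + 2)) (MvPolynomial σ R) :=
  Matrix.of fun r => Fin.snoc (fun j => X (v r j)) 1

variable {R}

@[simp]
theorem affineMatrix_castSucc (v : Matrix (Fin (s + 2)) (Fin (s + 1)) σ) (r : Fin (s + 2))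
    (j : Fin (s + 1)) : affineMatrix R v r j.castSucc = X (v r j) := by
  simp [affineMatrix]

@[simp]
theorem affineMatrix_last (v : Matrix (Fin (s + 2)) (Fin (s + 1)) σ) (r : Fin (s + 2)) :
    affineMatrix R v r (Fin.last (s + 1)) = 1 := by
  simp [affineMatrix]

theorem submatrix_affineMatrix (v : Matrix (Fin (s + 3)) (Fin (s + 2)) σ) (r : Fin (s + 3))
    (c : Fin (s + 2)) :
    (affineMatrix R v).submatrix r.succAbove c.castSucc.succAbove
      = affineMatrix R (v.submatrix r.succAbove c.succAbove) := by
  refine Matrix.ext fun a b => Fin.lastCases ?_ (fun b => ?_) b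
  · have h : c.castSucc.succAbove (Fin.last (s + 1)) = Fin.last (s + 2) := by
      rw [Fin.succAbove_castSucc_of_le c _ (Fin.le_last c), Fin.succ_last]
    rw [Matrix.submatrix_apply, h, affineMatrix_last, affineMatrix_last]
  · rw [Matrix.submatrix_apply, Fin.castSucc_succAbove_castSucc, affineMatrix_castSucc,
      affineMatrix_castSucc, Matrix.submatrix_apply]

theorem rename_det_affineMatrix {τ : Type*} (f : σ → τ) (v : Matrix (Fin (s + 2)) (Fin (s + 1)) σ) :
    rename f (affineMatrix R v).det = (affineMatrix R (v.map f)).det := by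
  rw [AlgHom.map_det]
  congr 1
  ext r c
  refine Fin.lastCases ?_ (fun j => ?_) c <;> simp

theorem exists_eq_of_mem_vars_det_affineMatrix {v : Matrix (Fin (s + 2)) (Fin (s + 1)) σ} {x : σ}
    (hx : x ∈ (affineMatrix R v).det.vars) : ∃ r j, v r j = x := by
  classical
  have hv : v = (Matrix.of fun r j => (r, j)).map fun p => v p.1 p.2 := rfl
  rw [hv, ← rename_det_affineMatrix] at hx
  obtain ⟨⟨r, j⟩, -, h⟩ := mem_vars_rename _ _ hx
  exact ⟨r, j, h⟩

theorem det_affineMatrix_two (v : Matrix (Fin 2) (Fin 1) σ) :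
    (affineMatrix R v).det = X (v 0 0) - X (v 1 0) := by
  rw [Matrix.det_fin_two]
  simp [affineMatrix, Fin.snoc]

theorem det_affineMatrix_eq_sum (v : Matrix (Fin (s + 3)) (Fin (s + 2)) σ) (c : Fin (s + 2)) :
    (affineMatrix R v).det = ∑ r : Fin (s + 3), (-1) ^ ((r : ℕ) + c)
      * (affineMatrix R (v.submatrix r.succAbove c.succAbove)).det * X (v r c) := by
  rw [Matrix.det_succ_column _ c.castSucc]
  refine Finset.sum_congr rfl fun r _ => ?_
  rw [affineMatrix_castSucc, submatrix_affineMatrix, Fin.val_castSucc]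
  ring

theorem sum_det_affineMatrix_submatrix (v : Matrix (Fin (s + 3)) (Fin (s + 2)) σ)
    (c : Fin (s + 2)) :
    ∑ r : Fin (s + 3), (-1) ^ ((r : ℕ) + c)
      * (affineMatrix R (v.submatrix r.succAbove c.succAbove)).det = 0 := by
  -- expand a matrix whose columns `c` and `last` both consist of ones
  set N := (affineMatrix R v).updateCol c.castSucc fun _ => 1
  have hc : c.castSucc ≠ Fin.last (s + 2) := (Fin.castSucc_lt_last c).ne
  have hN : N.det = 0 :=
    Matrix.det_zero_of_column_eq hc fun r => by simp [N, Matrix.updateCol_ne hc.symm]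
  rw [← hN, Matrix.det_succ_column N c.castSucc]
  refine Finset.sum_congr rfl fun r _ => ?_
  rw [Matrix.submatrix_updateCol_succAbove, submatrix_affineMatrix, Fin.val_castSucc]
  simp [N]

theorem det_affineMatrix_eq_mul_X_sub_X (v : Matrix (Fin (s + 3)) (Fin (s + 2)) σ) {c : Fin (s + 2)}
    {r₀ : Fin (s + 3)} {y : σ} (h : ∀ r ≠ r₀, v r c = y) :
    (affineMatrix R v).det = (-1) ^ ((r₀ : ℕ) + c)
      * (affineMatrix R (v.submatrix r₀.succAbove c.succAbove)).det
      * (X (v r₀ c) - X y) := by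
  set g : Fin (s + 3) → MvPolynomial σ R := fun r => (-1) ^ ((r : ℕ) + c)
    * (affineMatrix R (v.submatrix r.succAbove c.succAbove)).det
  have hg : ∑ r ∈ Finset.univ.erase r₀, g r = - g r₀ :=
    eq_neg_of_add_eq_zero_left <| (Finset.sum_erase_add _ _ (Finset.mem_univ r₀)).trans
      (sum_det_affineMatrix_submatrix v c)
  calc (affineMatrix R v).det
      = g r₀ * X (v r₀ c) + ∑ r ∈ Finset.univ.erase r₀, g r * X y := by
        rw [det_affineMatrix_eq_sum v c, ← Finset.add_sum_erase _ _ (Finset.mem_univ r₀)]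
        refine congrArg _ (Finset.sum_congr rfl fun r hr => ?_)
        rw [h r (Finset.ne_of_mem_erase hr)]
    _ = g r₀ * (X (v r₀ c) - X y) := by rw [← Finset.sum_mul, hg]; ring

noncomputable def affineMonomial (v : Matrix (Fin (s + 2)) (Fin (s + 1)) σ)
    (τ : Equiv.Perm (Fin (s + 2))) : σ →₀ ℕ :=
  ∑ j, Finsupp.single (v (τ j.castSucc) j) 1

theorem prod_affineMatrix_perm (v : Matrix (Fin (s + 2)) (Fin (s + 1)) σ)
    (τ : Equiv.Perm (Fin (s + 2))) :
    ∏ i, affineMatrix R v (τ i) i = monomial (affineMonomial v τ) 1 := by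
  rw [Fin.prod_univ_castSucc, affineMatrix_last, mul_one, affineMonomial, monomial_sum_one]
  simp only [affineMatrix_castSucc]
  rfl

theorem degree_affineMonomial (v : Matrix (Fin (s + 2)) (Fin (s + 1)) σ)
    (τ : Equiv.Perm (Fin (s + 2))) : (affineMonomial v τ).degree = s + 1 := by
  simp [affineMonomial]

theorem affineMonomial_ne_zero_iff [DecidableEq σ] {v : Matrix (Fin (s + 2)) (Fin (s + 1)) σ}
    {τ : Equiv.Perm (Fin (s + 2))} {x : σ} :
    affineMonomial v τ x ≠ 0 ↔ ∃ j, v (τ j.castSucc) j = x := by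
  simp [affineMonomial, Finsupp.finsetSum_apply, Finsupp.single_apply, Finset.sum_boole]

theorem totalDegree_det_affineMatrix_le (v : Matrix (Fin (s + 2)) (Fin (s + 1)) σ) :
    (affineMatrix R v).det.totalDegree ≤ s + 1 := by
  rw [Matrix.det_apply']
  refine totalDegree_finsetSum_le fun τ _ => ?_
  rw [prod_affineMatrix_perm, ← map_intCast (C : R →+* MvPolynomial σ R), C_mul_monomial]
  exact (totalDegree_monomial_le _ _).trans (degree_affineMonomial v τ).le

end AffineMatrix

section PairwiseDistinctExcept

variable {R : Type*} [CommRing R] {σ : Type*} {y : σ}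

/-- The entries of `v` are pairwise distinct, except that entries of column `j₀` may equal `y`. -/
def PairwiseDistinctExcept {ι κ : Type*} (v : Matrix ι κ σ) (j₀ : κ) (y : σ) : Prop :=
  ∀ r j r' j', v r j = v r' j' → j = j' ∧ (r = r' ∨ j = j₀ ∧ v r j = y)

namespace PairwiseDistinctExcept

theorem submatrix {ι κ ι' κ' : Type*} {v : Matrix ι κ σ} {j₀ : κ}
    (hv : PairwiseDistinctExcept v j₀ y) {f : ι' → ι} {g : κ' → κ}
    (hf : f.Injective) (hg : g.Injective) {j₀' : κ'} (hj₀ : g j₀' = j₀) :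
    PairwiseDistinctExcept (v.submatrix f g) j₀' y := by
  intro r j r' j' h
  obtain ⟨hj, hr⟩ := hv _ _ _ _ h
  obtain rfl := hg hj
  exact ⟨rfl, hr.imp (fun h => hf h) fun h => ⟨hg (h.1.trans hj₀.symm), h.2⟩⟩

section

variable {s : ℕ} {v : Matrix (Fin (s + 2)) (Fin (s + 1)) σ} {j₀ : Fin (s + 1)}

theorem eq_of_affineMonomial_eq (hv : PairwiseDistinctExcept v j₀ y)
    {τ τ' : Equiv.Perm (Fin (s + 2))} (hτ : v (τ j₀.castSucc) j₀ ≠ y)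
    (h : affineMonomial v τ' = affineMonomial v τ) : τ' = τ := by
  classical
  have hcast : ∀ j : Fin (s + 1), τ' j.castSucc = τ j.castSucc := by
    intro j
    have hne : affineMonomial v τ (v (τ' j.castSucc) j) ≠ 0 :=
      h ▸ affineMonomial_ne_zero_iff.mpr ⟨j, rfl⟩
    obtain ⟨j', hj'⟩ := affineMonomial_ne_zero_iff.mp hne
    obtain ⟨rfl, hrow | ⟨rfl, hy⟩⟩ := hv _ _ _ _ hj'
    · exact hrow.symm
    · exact absurd hy hτ
  have hlast : τ' (Fin.last _) = τ (Fin.last _) := by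
    obtain ⟨j, hj⟩ | hj := Fin.eq_castSucc_or_eq_last (τ.symm (τ' (Fin.last _)))
    · have := τ'.injective ((τ.symm_apply_eq.mp hj).trans (hcast j).symm)
      exact absurd this (Fin.castSucc_lt_last j).ne'
    · exact τ.symm_apply_eq.mp hj
  ext i
  rcases Fin.eq_castSucc_or_eq_last i with ⟨j, rfl⟩ | rfl
  · rw [hcast]
  · rw [hlast]

theorem coeff_affineMonomial_det (hv : PairwiseDistinctExcept v j₀ y)
    {τ : Equiv.Perm (Fin (s + 2))} (hτ : v (τ j₀.castSucc) j₀ ≠ y) :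
    coeff (affineMonomial v τ) (affineMatrix R v).det = (Equiv.Perm.sign τ : ℤ) := by
  classical
  rw [Matrix.det_apply', coeff_sum, Finset.sum_eq_single τ]
  · rw [prod_affineMatrix_perm, ← map_intCast (C : R →+* MvPolynomial σ R), coeff_C_mul,
      coeff_monomial, if_pos rfl, mul_one]
  · intro τ' _ hne
    rw [prod_affineMatrix_perm, ← map_intCast (C : R →+* MvPolynomial σ R), coeff_C_mul,
      coeff_monomial, if_neg fun h => hne (hv.eq_of_affineMonomial_eq hτ h), mul_zero]
  · simp

theorem affineMonomial_mem_support [Nontrivial R] (hv : PairwiseDistinctExcept v j₀ y)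
    {τ : Equiv.Perm (Fin (s + 2))} (hτ : v (τ j₀.castSucc) j₀ ≠ y) :
    affineMonomial v τ ∈ (affineMatrix R v).det.support := by
  rw [mem_support_iff, hv.coeff_affineMonomial_det hτ]
  rcases Int.units_eq_one_or (Equiv.Perm.sign τ) with h | h <;> simp [h]

theorem totalDegree_det [Nontrivial R] (hv : PairwiseDistinctExcept v j₀ y) {r : Fin (s + 2)}
    (hr : v r j₀ ≠ y) : (affineMatrix R v).det.totalDegree = s + 1 := by
  have hτ : v (Equiv.swap j₀.castSucc r j₀.castSucc) j₀ ≠ y := by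
    rwa [Equiv.swap_apply_left]
  refine (totalDegree_det_affineMatrix_le v).antisymm ?_
  calc s + 1 = (affineMonomial v (Equiv.swap j₀.castSucc r)).degree :=
        (degree_affineMonomial v _).symm
    _ ≤ _ := le_totalDegree (hv.affineMonomial_mem_support hτ)

theorem mem_vars_det [Nontrivial R] (hv : PairwiseDistinctExcept v j₀ y) {r : Fin (s + 2)}
    (hr : v r j₀ ≠ y) : v r j₀ ∈ (affineMatrix R v).det.vars := by
  classical
  have hτ : v (Equiv.swap j₀.castSucc r j₀.castSucc) j₀ ≠ y := by
    rwa [Equiv.swap_apply_left]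
  rw [mem_vars_iff_mem_support]
  refine ⟨_, hv.affineMonomial_mem_support hτ, Finsupp.mem_support_iff.mpr ?_⟩
  exact affineMonomial_ne_zero_iff.mpr ⟨j₀, by rw [Equiv.swap_apply_left]⟩

end

end PairwiseDistinctExcept

theorem totalDegree_det_affineMatrix_of_injective [Nontrivial R] {s : ℕ}
    {v : Matrix (Fin (s + 2)) (Fin (s + 1)) σ}
    (hv : (fun p : Fin (s + 2) × Fin (s + 1) => v p.1 p.2).Injective) :
    (affineMatrix R v).det.totalDegree = s + 1 := by
  have hv' : PairwiseDistinctExcept v 0 (v 1 0) := fun r j r' j' h => by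
    obtain ⟨rfl, rfl⟩ := Prod.ext_iff.mp (@hv (r, j) (r', j') h)
    exact ⟨rfl, Or.inl rfl⟩
  exact hv'.totalDegree_det (r := 0) fun h =>
    zero_ne_one (congrArg Prod.fst (@hv (0, 0) (1, 0) h))

namespace PairwiseDistinctExcept

variable {s : ℕ} {v : Matrix (Fin (s + 3)) (Fin (s + 2)) σ} {j₀ : Fin (s + 2)}

theorem notMem_vars_det_submatrix_col (hv : PairwiseDistinctExcept v j₀ y) (r r' : Fin (s + 3))
    (c : Fin (s + 2)) :
    v r' c ∉ (affineMatrix R (v.submatrix r.succAbove c.succAbove)).det.vars := fun hx => by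
  obtain ⟨a, b, h⟩ := exists_eq_of_mem_vars_det_affineMatrix hx
  exact Fin.succAbove_ne c b (hv _ _ _ _ h).1

theorem notMem_vars_det_submatrix_row (hv : PairwiseDistinctExcept v j₀ y) {r : Fin (s + 3)}
    {j : Fin (s + 2)} (hy : v r j ≠ y) (c : Fin (s + 2)) :
    v r j ∉ (affineMatrix R (v.submatrix r.succAbove c.succAbove)).det.vars := fun hx => by
  obtain ⟨a, b, h⟩ := exists_eq_of_mem_vars_det_affineMatrix hx
  rcases (hv _ _ _ _ h).2 with h' | ⟨-, h'⟩
  · exact Fin.succAbove_ne r a h'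
  · exact hy (h.symm.trans h')

theorem mem_vars_det_submatrix [Nontrivial R] (hv : PairwiseDistinctExcept v j₀ y)
    {c : Fin (s + 2)} {j₀' : Fin (s + 1)} (hc : c.succAbove j₀' = j₀) {r rs : Fin (s + 3)}
    (hr : r ≠ rs) (hy : v r j₀ ≠ y) :
    v r j₀ ∈ (affineMatrix R (v.submatrix rs.succAbove c.succAbove)).det.vars := by
  obtain ⟨a, rfl⟩ := Fin.exists_succAbove_eq hr
  have hv' := hv.submatrix (f := rs.succAbove) Fin.succAbove_right_injective
    Fin.succAbove_right_injective hc
  have := hv'.mem_vars_det (R := R) (r := a) (by rwa [Matrix.submatrix_apply, hc])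
  rwa [Matrix.submatrix_apply, hc] at this

theorem irreducible_det_of_irreducible_submatrix [IsDomain R] [DecidableEq σ]
    (hv : PairwiseDistinctExcept v j₀ y) {c : Fin (s + 2)} {j₀' : Fin (s + 1)}
    (hc : c.succAbove j₀' = j₀) {rs rq rq' : Fin (s + 3)} (hrq : rq ≠ rs) (hrq' : rq' ≠ rq)
    (hyq : v rq j₀ ≠ y) (hyq' : v rq' j₀ ≠ y)
    (hirr : Irreducible (affineMatrix R (v.submatrix rs.succAbove c.succAbove)).det) :
    Irreducible (affineMatrix R v).det := by
  set M : Fin (s + 3) → MvPolynomial σ R :=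
    fun r => (affineMatrix R (v.submatrix r.succAbove c.succAbove)).det
  set g : Fin (s + 3) → MvPolynomial σ R := fun r => (-1) ^ ((r : ℕ) + c) * M r
  have hsign : ∀ r : Fin (s + 3), IsUnit ((-1) ^ ((r : ℕ) + c) : MvPolynomial σ R) :=
    fun r => (isUnit_one.neg).pow _
  have hu : (fun r => v r c).Injective := fun r r' h =>
    (hv _ _ _ _ h).2.resolve_right fun h' => (hc ▸ Fin.succAbove_ne c j₀') h'.1.symm
  have hvars : ∀ r r', v r c ∉ (g r').vars := fun r r' => by
    simpa only [g, vars_neg_one_pow_mul] using hv.notMem_vars_det_submatrix_col r' r c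
  -- the variable `v rq j₀` occurs in `M rs` but not in `M rq ≠ 0`
  have hndvd : ¬ M rs ∣ g rq := fun h => by
    have hne : M rq ≠ 0 := fun h0 => by
      have : v rq' j₀ ∈ (M rq).vars := hv.mem_vars_det_submatrix hc hrq' hyq'
      rw [h0, vars_0] at this
      exact Finset.notMem_empty _ this
    exact hv.notMem_vars_det_submatrix_row hyq c <|
      vars_subset_of_dvd hne ((hsign rq).dvd_mul_left.mp h)
        (hv.mem_vars_det_submatrix hc hrq hyq)
  have hdet : (affineMatrix R v).det = g rs * X (v rs c)
      + ∑ r ∈ Finset.univ.erase rs, g r * X (v r c) := by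
    rw [det_affineMatrix_eq_sum v c]
    exact (Finset.add_sum_erase _ _ (Finset.mem_univ rs)).symm
  rw [hdet]
  refine irreducible_mul_X_add _ _ _ (mul_ne_zero (hsign rs).ne_zero hirr.ne_zero) (hvars rs rs)
    (notMem_vars_sum_mul_X _ _ _ (fun r _ => hvars rs r) fun r hr =>
      hu.ne (Finset.ne_of_mem_erase hr)) fun d hdA hdB => ?_
  obtain ⟨e, he⟩ := (hsign rs).dvd_mul_left.mp hdA
  refine (hirr.isUnit_or_isUnit he).resolve_right fun he' => hndvd ?_
  have hMd : M rs ∣ d := he'.dvd_mul_right.mp (he ▸ dvd_rfl)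
  refine dvd_of_dvd_sum_mul_X hu.injOn (fun r _ r' _ => hvars r r')
    (fun r _ => hv.notMem_vars_det_submatrix_col rs r c) ?_ (Finset.mem_univ rq)
  rw [← Finset.add_sum_erase _ _ (Finset.mem_univ rs)]
  exact hMd.trans (dvd_add (dvd_mul_of_dvd_left hdA _) hdB)

end PairwiseDistinctExcept

theorem PairwiseDistinctExcept.irreducible_det [IsDomain R] [DecidableEq σ] : ∀ {s : ℕ}
    {v : Matrix (Fin (s + 2)) (Fin (s + 1)) σ} {j₀ : Fin (s + 1)} {y : σ},
    PairwiseDistinctExcept v j₀ y → #{r | v r j₀ = y} ≤ s → Irreducible (affineMatrix R v).det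
  | 0, v, j₀, y, hv, hY => by
    obtain rfl : j₀ = 0 := Fin.fin_one_eq_zero j₀
    have hy : v 0 0 ≠ y := by simp at hY; exact hY.1
    rw [det_affineMatrix_two]
    refine irreducible_X_sub_X fun h => ?_
    rcases (hv 0 0 1 0 h).2 with h' | ⟨-, h'⟩
    · exact absurd h' (by decide)
    · exact hy h'
  | s + 1, v, j₀, y, hv, hY => by
    obtain ⟨c, hc⟩ := exists_ne j₀
    obtain ⟨j₀', hj₀'⟩ := Fin.exists_succAbove_eq hc.symm
    obtain ⟨rs, rq, rq', hrq, hrq', hyq, hyq', hYs⟩ := Fin.exists_rows_of_card_filter_le _ hY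
    refine hv.irreducible_det_of_irreducible_submatrix hj₀' hrq hrq' hyq hyq'
      (irreducible_det (hv.submatrix Fin.succAbove_right_injective
        Fin.succAbove_right_injective hj₀') ?_)
    simpa [Matrix.submatrix_apply, hj₀'] using hYs

end PairwiseDistinctExcept

section Restriction

variable {n K : ℕ} (i₀ : Fin (K + 2) → Fin n) (ii : Fin (K + 3) → Fin n)

def restrictedVars : Matrix (Fin (K + 3)) (Fin (K + 2)) (Fin n × Fin (K + 2)) :=
  Matrix.of fun r j =>
    if (∃ t, i₀ t = ii r) ∧ j = (⟨1, by omega⟩ : Fin (K + 2)) then (i₀ 0, j) else (ii r, j)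

theorem restrictL_det_rowMatrix :
    restrictL i₀ (rowMatrix ii).det = (affineMatrix ℂ (restrictedVars i₀ ii)).det :=
  rename_det_affineMatrix _ (Matrix.of fun r j => (ii r, j))

variable {i₀ ii}

theorem restrictedVars_of_ne {r : Fin (K + 3)} {j : Fin (K + 2)} (hj : j ≠ ⟨1, by omega⟩) :
    restrictedVars i₀ ii r j = (ii r, j) :=
  if_neg fun h => hj h.2

theorem restrictedVars_of_forall_ne {r : Fin (K + 3)} (hr : ∀ t, i₀ t ≠ ii r) (j : Fin (K + 2)) :
    restrictedVars i₀ ii r j = (ii r, j) :=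
  if_neg fun h => absurd h.1 (not_exists.mpr hr)

theorem restrictedVars_eq_iff {r : Fin (K + 3)} :
    restrictedVars i₀ ii r ⟨1, by omega⟩ = (i₀ 0, ⟨1, by omega⟩) ↔ ∃ t, i₀ t = ii r := by
  refine ⟨fun h => ?_, fun h => if_pos ⟨h, rfl⟩⟩
  by_contra hr
  rw [restrictedVars_of_forall_ne (not_exists.mp hr)] at h
  exact hr ⟨0, (congrArg Prod.fst h).symm⟩

theorem pairwiseDistinctExcept_restrictedVars (hii : ii.Injective) :
    PairwiseDistinctExcept (restrictedVars i₀ ii) ⟨1, by omega⟩ (i₀ 0, ⟨1, by omega⟩) := by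
  have hsnd : ∀ r j, (restrictedVars i₀ ii r j).2 = j := fun r j => by
    simp only [restrictedVars, Matrix.of_apply]; split_ifs <;> rfl
  have hfst : ∀ r j, restrictedVars i₀ ii r j ≠ (i₀ 0, ⟨1, by omega⟩) →
      restrictedVars i₀ ii r j = (ii r, j) := fun r j h =>
    if_neg fun hc => h (by rw [restrictedVars, Matrix.of_apply, if_pos hc, hc.2])
  intro r j r' j' h
  obtain rfl : j = j' := by rw [← hsnd r j, h, hsnd]
  refine ⟨rfl, or_iff_not_imp_right.mpr fun hy => hii ?_⟩
  have hy' : restrictedVars i₀ ii r j ≠ (i₀ 0, ⟨1, by omega⟩) := fun he =>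
    hy ⟨(hsnd r j).symm.trans (congrArg Prod.snd he), he⟩
  exact congrArg Prod.fst ((hfst r j hy').symm.trans (h.trans (hfst r' j (h ▸ hy'))))

theorem irreducible_restrictL_det (hii : ii.Injective) {t₀ : Fin (K + 2)}
    (ht₀ : ∀ r, ii r ≠ i₀ t₀) : Irreducible (restrictL i₀ (rowMatrix ii).det) := by
  rw [restrictL_det_rowMatrix]
  refine (pairwiseDistinctExcept_restrictedVars hii).irreducible_det ?_
  simp only [restrictedVars_eq_iff]
  exact Fin.card_filter_exists_eq_le_of_forall_ne hii ht₀

theorem totalDegree_restrictL_det (hii : ii.Injective) :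
    (restrictL i₀ (rowMatrix ii).det).totalDegree = K + 2 := by
  obtain ⟨r₀, hr₀⟩ := Fin.exists_forall_ne_of_injective (f := i₀) hii
  rw [restrictL_det_rowMatrix]
  exact (pairwiseDistinctExcept_restrictedVars hii).totalDegree_det (r := r₀) fun h =>
    (not_exists.mpr hr₀) (restrictedVars_eq_iff.mp h)

theorem complMinor_eq (r₀ : Fin (K + 3)) :
    complMinor ii r₀ = (affineMatrix ℂ ((Matrix.of fun r j => (ii r, j)).submatrix r₀.succAbove
      (⟨1, by omega⟩ : Fin (K + 2)).succAbove)).det := by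
  rw [← submatrix_affineMatrix]
  rfl

theorem restrictL_det_rowMatrix_eq_mul (h₀ : i₀.Injective) (hcov : ∀ t, ∃ r, ii r = i₀ t)
    {r₀ : Fin (K + 3)} (hr₀ : ∀ t, i₀ t ≠ ii r₀) :
    restrictL i₀ (rowMatrix ii).det = (-1) ^ ((r₀ : ℕ) + 1) * complMinor ii r₀
      * (X (ii r₀, ⟨1, by omega⟩) - X (i₀ 0, ⟨1, by omega⟩)) := by
  have hsub : (restrictedVars i₀ ii).submatrix r₀.succAbove (⟨1, by omega⟩ : Fin (K + 2)).succAbove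
      = (Matrix.of fun r j => (ii r, j)).submatrix r₀.succAbove
        (⟨1, by omega⟩ : Fin (K + 2)).succAbove :=
    Matrix.ext fun _ b => restrictedVars_of_ne (Fin.succAbove_ne _ b)
  rw [restrictL_det_rowMatrix, det_affineMatrix_eq_mul_X_sub_X _ fun r hr =>
      restrictedVars_eq_iff.mpr (Fin.exists_eq_of_forall_exists_of_ne h₀ hcov hr₀ hr),
    hsub, restrictedVars_of_forall_ne hr₀, complMinor_eq]

theorem not_irreducible_restrictL_det (h₀ : i₀.Injective) (hii : ii.Injective)
    (hcov : ∀ t, ∃ r, ii r = i₀ t) : ¬ Irreducible (restrictL i₀ (rowMatrix ii).det) := by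
  obtain ⟨r₀, hr₀⟩ := Fin.exists_forall_ne_of_injective (f := i₀) hii
  rw [restrictL_det_rowMatrix_eq_mul h₀ hcov hr₀, mul_assoc,
    irreducible_isUnit_mul (isUnit_one.neg.pow _)]
  refine fun hirr => (hirr.isUnit_or_isUnit rfl).elim (fun h => ?_)
    (irreducible_X_sub_X fun h => hr₀ 0 (congrArg Prod.fst h).symm).not_isUnit
  have hdeg := (isUnit_iff_totalDegree_of_isReduced.mp h).2
  rw [complMinor_eq, totalDegree_det_affineMatrix_of_injective fun p q h =>
    Prod.ext (Fin.succAbove_right_injective (hii (congrArg Prod.fst h)))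
      (Fin.succAbove_right_injective (congrArg Prod.snd h))] at hdeg
  exact K.succ_ne_zero hdeg

end Restriction

/-- Let `m = K + 2 > 1`, let `i₀` be an index, `ii₀ = (i_1,...,i_m)` distinct indices
avoiding `i₀`, and `L` the subspace `z_{i_1,2} = ⋯ = z_{i_m,2}`.  For a multiindex
`ii` of `m + 1` distinct indices avoiding `i₀`: the restriction `d_ii|_L` is
reducible iff `ii` contains all of `i_1,...,i_m`; in that case
`d_ii|_L = ± D_{ii;i,2}·(z_{i,2} − z_{i_1,2})` where `i` is the unique element of `ii`
not among the `i_t`; and `deg (d_ii|_L) = m` in any case. -/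
theorem restriction_reducibility {n K : ℕ}
    (i₀ : Fin (K + 2) → Fin n) (h₀ : Function.Injective i₀)
    (ii : Fin (K + 3) → Fin n) (hii : Function.Injective ii) :
    (¬ Irreducible (restrictL i₀ (rowMatrix ii).det) ↔ ∀ t, ∃ r, ii r = i₀ t) ∧
    (∀ r₀ : Fin (K + 3), (∀ t, i₀ t ≠ ii r₀) → (∀ t, ∃ r, ii r = i₀ t) →
      (restrictL i₀ (rowMatrix ii).det
          = complMinor ii r₀ * (X (ii r₀, ⟨1, by omega⟩) - X (i₀ 0, ⟨1, by omega⟩)) ∨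
        restrictL i₀ (rowMatrix ii).det
          = -(complMinor ii r₀ * (X (ii r₀, ⟨1, by omega⟩) - X (i₀ 0, ⟨1, by omega⟩))))) ∧
    (restrictL i₀ (rowMatrix ii).det).totalDegree = K + 2 := by
  refine ⟨⟨fun hred => ?_, not_irreducible_restrictL_det h₀ hii⟩, fun r₀ hr₀ hcov => ?_,
    totalDegree_restrictL_det hii⟩
  · by_contra hcov
    push Not at hcov
    obtain ⟨t₀, ht₀⟩ := hcov
    exact hred (irreducible_restrictL_det hii ht₀)
  · rw [restrictL_det_rowMatrix_eq_mul h₀ hcov hr₀, mul_assoc]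
    rcases neg_one_pow_eq_or (MvPolynomial (Fin n × Fin (K + 2)) ℂ) ((r₀ : ℕ) + 1) with h | h
    · exact .inl (by rw [h, one_mul])
    · exact .inr (by rw [h, neg_one_mul])
end

section
/- The stabilizer in S(n) of the ordered normal simplex ∇₂^{m-1} of the second type, whose i-th vertex (i = 1,...,m) is the determinant cross ratio obtained from e_{(1,...,m-1);m,m+1,m+2,m+3} by transposing i and m, equals the subgroup S({m+4,...,n}) ⊂ S(n) of permutations fixing 1,...,m+3 pointwise. -/
/-!
On the moment curve `q_i = (t_i, t_i², …, t_iᵐ)` every affine determinant is, up to sign, a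
Vandermonde determinant, so the determinant cross ratio `e_{𝐢;j,k,l,s}` becomes the classical cross
ratio of `t_j, t_k, t_l, t_s`. If `σ` fixes the vertex with final indices `a, b, c, d`, the cross
ratios of the `t`-values at `σa, σb, σc, σd` and at `a, b, c, d` agree for every injective `t`;
changing `t` at a single point outside `{a, b, c, d}` then shows that `σ` permutes `{a, b, c, d}`.
All vertices share `b, c, d = m+1, m+2, m+3`, so comparing two of them, `σ` permutes `{b, c, d}`
and fixes each `i ≤ m`; a single numerical evaluation excludes the nontrivial permutations of
`{b, c, d}`.
-/

noncomputable def crossRatio (a b c d : ℂ) : ℂ := (b - a) * (d - c) / ((c - a) * (d - b))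

lemma crossRatio_swap_left (a b c d : ℂ) : crossRatio b a d c = crossRatio a b c d := by
  unfold crossRatio; ring

lemma crossRatio_swap_pairs (a b c d : ℂ) : crossRatio c d a b = crossRatio a b c d := by
  unfold crossRatio; ring

lemma crossRatio_left_inj {a a' b c d : ℂ} (hbc : b ≠ c) (hbd : b ≠ d) (hcd : c ≠ d)
    (ha : a ≠ c) (ha' : a' ≠ c) : crossRatio a b c d = crossRatio a' b c d ↔ a = a' := by
  refine ⟨fun h => ?_, fun h => h ▸ rfl⟩
  have := sub_ne_zero.mpr ha.symm
  have := sub_ne_zero.mpr ha'.symm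
  have := sub_ne_zero.mpr hbd.symm
  have := sub_ne_zero.mpr hcd.symm
  unfold crossRatio at h
  field_simp at h
  have : (b - c) * (a - a') = 0 := by linear_combination h
  simpa [sub_eq_zero, hbc] using this

lemma eq_one_two_three_of_crossRatio_eq {x y z : ℂ} (hx : x = 1 ∨ x = 2 ∨ x = 3)
    (hy : y = 1 ∨ y = 2 ∨ y = 3) (hz : z = 1 ∨ z = 2 ∨ z = 3)
    (h : crossRatio 0 x y z = crossRatio 0 1 2 3) : x = 1 ∧ y = 2 ∧ z = 3 := by
  rcases hx with rfl | rfl | rfl <;> rcases hy with rfl | rfl | rfl <;>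
    rcases hz with rfl | rfl | rfl <;> norm_num [crossRatio] at *

section MomentCurve

open Finset

lemma Fin.Ioi_castSucc_eq_insert_last {N : ℕ} (i : Fin N) :
    Ioi i.castSucc = insert (Fin.last N) ((Ioi i).map Fin.castSuccEmb) := by
  rw [Fin.map_castSuccEmb_Ioi, Ioo_insert_right (Fin.castSucc_lt_last i)]
  ext x
  simp [Fin.le_last]

lemma prod_Ioi_sub_snoc {R : Type*} [CommRing R] {N : ℕ} (v : Fin N → R) (x : R) :
    ∏ i : Fin (N + 1), ∏ j ∈ Ioi i,
        (Fin.snoc (α := fun _ => R) v x j - Fin.snoc (α := fun _ => R) v x i) =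
      (∏ i : Fin N, ∏ j ∈ Ioi i, (v j - v i)) * ∏ i : Fin N, (x - v i) := by
  rw [Fin.prod_univ_castSucc, ← Fin.top_eq_last, Ioi_top, prod_empty, mul_one, ← prod_mul_distrib]
  refine prod_congr rfl fun i _ => ?_
  rw [Fin.Ioi_castSucc_eq_insert_last, prod_insert (by simp), prod_map, mul_comm]
  simp

def momentCurve {n m : ℕ} (t : Fin n → ℂ) : Fin n → Fin m → ℂ := fun i c => t i ^ (c.val + 1)

lemma dA_momentCurve {n m : ℕ} (t : Fin n → ℂ) (a : Fin (m + 1) → Fin n) :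
    dA (momentCurve t) a = (-1) ^ m * ∏ i : Fin (m + 1), ∏ j ∈ Ioi i, ((t ∘ a) j - (t ∘ a) i) := by
  have hrot : Matrix.of (fun r c : Fin (m + 1) => Fin.snoc (momentCurve t (a r) : Fin m → ℂ) 1 c)
      = (Matrix.vandermonde (t ∘ a)).submatrix id (finRotate (m + 1)) := by
    ext r c
    refine Fin.lastCases ?_ (fun c => ?_) c
    · simp
    · simp [momentCurve]
  rw [dA, hrot, Matrix.det_permute', sign_finRotate, Matrix.det_vandermonde]
  simp

lemma dA_momentCurve_snoc_snoc {n M : ℕ} (t : Fin n → ℂ) (i : Fin M → Fin n) (j k : Fin n) :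
    dA (momentCurve t) (Fin.snoc (Fin.snoc i j) k) = (-1) ^ (M + 1) *
      ((∏ r : Fin M, ∏ c ∈ Ioi r, (t (i c) - t (i r))) * (∏ r : Fin M, (t j - t (i r))) *
        (∏ r : Fin M, (t k - t (i r))) * (t k - t j)) := by
  rw [dA_momentCurve, Fin.comp_snoc, Fin.comp_snoc, prod_Ioi_sub_snoc, prod_Ioi_sub_snoc,
    Fin.prod_univ_castSucc]
  simp only [Function.comp_apply, Fin.snoc_castSucc, Fin.snoc_last]
  ring

lemma genPos_momentCurve {n m : ℕ} {t : Fin n → ℂ} (ht : Function.Injective t) :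
    GenPos (momentCurve t : Fin n → Fin m → ℂ) := by
  intro a ha
  rw [dA_momentCurve]
  refine mul_ne_zero (by simp) (prod_ne_zero_iff.mpr fun i _ => prod_ne_zero_iff.mpr fun j hj => ?_)
  exact sub_ne_zero.mpr ((ht.comp ha).ne (mem_Ioi.mp hj).ne')

lemma ecr_momentCurve {n M : ℕ} {t : Fin n → ℂ} (ht : Function.Injective t) {i : Fin M → Fin n}
    (hi : Function.Injective i) {j k l s : Fin n} (hj : j ∉ Set.range i) (hk : k ∉ Set.range i)
    (hl : l ∉ Set.range i) (hs : s ∉ Set.range i) (hjl : j ≠ l) (hks : k ≠ s) :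
    ecr (momentCurve t) i j k l s = crossRatio (t j) (t k) (t l) (t s) := by
  have hV : ∏ r : Fin M, ∏ c ∈ Ioi r, (t (i c) - t (i r)) ≠ 0 :=
    prod_ne_zero_iff.mpr fun r _ => prod_ne_zero_iff.mpr fun c hc =>
      sub_ne_zero.mpr ((ht.comp hi).ne (mem_Ioi.mp hc).ne')
  have hQ : ∀ x ∉ Set.range i, ∏ r : Fin M, (t x - t (i r)) ≠ 0 := fun x hx =>
    prod_ne_zero_iff.mpr fun r _ => sub_ne_zero.mpr (ht.ne fun h => hx ⟨r, h.symm⟩)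
  have hjl' : t l - t j ≠ 0 := sub_ne_zero.mpr (ht.ne hjl.symm)
  have hks' : t s - t k ≠ 0 := sub_ne_zero.mpr (ht.ne hks.symm)
  have := hQ j hj; have := hQ k hk; have := hQ l hl; have := hQ s hs
  rw [ecr, dA_momentCurve_snoc_snoc, dA_momentCurve_snoc_snoc, dA_momentCurve_snoc_snoc,
    dA_momentCurve_snoc_snoc, crossRatio]
  field_simp

end MomentCurve

lemma ecr_comp {n M : ℕ} (q : Fin n → Fin (M + 1) → ℂ) (f : Fin n → Fin n) (i : Fin M → Fin n)
    (j k l s : Fin n) : ecr q (f ∘ i) (f j) (f k) (f l) (f s) = ecr (q ∘ f) i j k l s := by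
  simp only [ecr, ← Fin.comp_snoc]
  rfl

/-- The determinant cross ratio `e_{f(0),…,f(M-1); f(M),f(M+1),f(M+2),f(M+3)}`. -/
noncomputable def ecrImage {n M : ℕ} (hM : M + 4 ≤ n) (q : Fin n → Fin (M + 1) → ℂ)
    (f : Fin n → Fin n) : ℂ :=
  ecr q (fun r : Fin M => f (Fin.castLE (by omega) r)) (f ⟨M, by omega⟩) (f ⟨M + 1, by omega⟩)
    (f ⟨M + 2, by omega⟩) (f ⟨M + 3, by omega⟩)

lemma ecrImage_momentCurve {n M : ℕ} (hM : M + 4 ≤ n) {t : Fin n → ℂ} {f : Fin n → Fin n}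
    (htf : Function.Injective (t ∘ f)) :
    ecrImage hM (momentCurve t) f = crossRatio (t (f ⟨M, by omega⟩)) (t (f ⟨M + 1, by omega⟩))
      (t (f ⟨M + 2, by omega⟩)) (t (f ⟨M + 3, by omega⟩)) := by
  have hnot : ∀ a, M ≤ a → ∀ h : a < n,
      (⟨a, h⟩ : Fin n) ∉ Set.range (Fin.castLE (by omega) : Fin M → Fin n) := by
    rintro a ha h ⟨r, hr⟩
    have := congrArg Fin.val hr
    simp only [Fin.val_castLE] at this
    omega
  rw [ecrImage, ← Function.comp_def f, ecr_comp]
  exact ecr_momentCurve htf (Fin.castLE_injective _) (hnot _ le_rfl _) (hnot _ (by omega) _)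
    (hnot _ (by omega) _) (hnot _ (by omega) _) (by simp) (by simp)

lemma ecrImage_congr {n M : ℕ} (hM : M + 4 ≤ n) (q : Fin n → Fin (M + 1) → ℂ)
    {f g : Fin n → Fin n} (h : ∀ z : Fin n, z.val ≤ M + 3 → f z = g z) :
    ecrImage hM q f = ecrImage hM q g := by
  have hfg : (fun r : Fin M => f (Fin.castLE (by omega) r)) =
      fun r => g (Fin.castLE (by omega) r) :=
    funext fun r => h _ (by simp only [Fin.val_castLE]; omega)
  rw [ecrImage, ecrImage, hfg, h ⟨M, _⟩ (by simp), h ⟨M + 1, _⟩ (by simp), h ⟨M + 2, _⟩ (by simp),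
    h ⟨M + 3, _⟩ le_rfl]

def FixesCrossRatio {n : ℕ} (σ : Equiv.Perm (Fin n)) (a b c d : Fin n) : Prop :=
  ∀ t : Fin n → ℂ, Function.Injective t →
    crossRatio (t (σ a)) (t (σ b)) (t (σ c)) (t (σ d)) = crossRatio (t a) (t b) (t c) (t d)

namespace FixesCrossRatio

variable {n : ℕ} {σ : Equiv.Perm (Fin n)} {a b c d : Fin n}

lemma swap_left (h : FixesCrossRatio σ a b c d) : FixesCrossRatio σ b a d c := fun t ht => by
  simpa only [crossRatio_swap_left] using h t ht

lemma swap_pairs (h : FixesCrossRatio σ a b c d) : FixesCrossRatio σ c d a b := fun t ht => by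
  simpa only [crossRatio_swap_pairs] using h t ht

lemma apply_left_eq_or (h : FixesCrossRatio σ a b c d) (hab : a ≠ b) (hac : a ≠ c) (had : a ≠ d)
    (hbc : b ≠ c) (hbd : b ≠ d) (hcd : c ≠ d) : σ a = a ∨ σ a = b ∨ σ a = c ∨ σ a = d := by
  by_contra hy
  simp only [not_or] at hy
  obtain ⟨hya, hyb, hyc, hyd⟩ := hy
  -- Move the value of `t` at `σ a` alone: the right-hand side cannot see it.
  let t₀ : Fin n → ℂ := fun z => (z.val : ℂ)
  have ht₀ : Function.Injective t₀ := Nat.cast_injective.comp Fin.val_injective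
  have hn : ∀ z, t₀ z ≠ n := fun z h => z.isLt.ne (Nat.cast_injective h)
  let t₁ := Function.update t₀ (σ a) n
  have ht₁ : Function.Injective t₁ := by
    intro x y hxy
    simp only [t₁, Function.update_apply] at hxy
    split_ifs at hxy with hx hy hy
    · exact hx.trans hy.symm
    · exact absurd hxy.symm (hn y)
    · exact absurd hxy (hn x)
    · exact ht₀ hxy
  have ht₁₀ : ∀ z ≠ σ a, t₁ z = t₀ z := fun z hz => Function.update_of_ne hz _ _
  have ht₁a : t₁ (σ a) = n := Function.update_self _ _ _
  have h₀ := h t₀ ht₀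
  have h₁ := h t₁ ht₁
  have hσ : ∀ {x}, x ≠ a → σ x ≠ σ a := fun hx => σ.injective.ne hx
  rw [ht₁₀ _ (Ne.symm hya), ht₁₀ _ (Ne.symm hyb), ht₁₀ _ (Ne.symm hyc), ht₁₀ _ (Ne.symm hyd), ← h₀,
    ht₁₀ _ (hσ hab.symm), ht₁₀ _ (hσ hac.symm), ht₁₀ _ (hσ had.symm), ht₁a,
    crossRatio_left_inj] at h₁
  · exact hn _ h₁.symm
  all_goals first
    | exact (hn _).symm
    | exact ht₀.ne (σ.injective.ne ‹_›)

lemma mapsTo (h : FixesCrossRatio σ a b c d) (hab : a ≠ b) (hac : a ≠ c) (had : a ≠ d)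
    (hbc : b ≠ c) (hbd : b ≠ d) (hcd : c ≠ d) : Set.MapsTo σ {a, b, c, d} {a, b, c, d} := by
  rintro x (rfl | rfl | rfl | rfl)
  · rcases h.apply_left_eq_or hab hac had hbc hbd hcd with h | h | h | h <;> simp [h]
  · rcases h.swap_left.apply_left_eq_or hab.symm hbd hbc had hac hcd.symm with h | h | h | h <;>
      simp [h]
  · rcases h.swap_pairs.apply_left_eq_or hcd hac.symm hbc.symm had.symm hbd.symm hab with
      h | h | h | h <;> simp [h]
  · rcases h.swap_pairs.swap_left.apply_left_eq_or hcd.symm hbd.symm had.symm hbc.symm hac.symm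
      hab.symm with h | h | h | h <;> simp [h]

lemma eq_of_consecutive (h : FixesCrossRatio σ a b c d) (hb : b.val = a.val + 1)
    (hc : c.val = a.val + 2) (hd : d.val = a.val + 3) (ha : σ a = a)
    (hσ : Set.MapsTo σ {b, c, d} {b, c, d}) : σ b = b ∧ σ c = c ∧ σ d = d := by
  let t : Fin n → ℂ := fun z => (z.val : ℂ) - a.val
  have ht : Function.Injective t := fun x y hxy =>
    Fin.ext (Nat.cast_injective (sub_left_inj.mp hxy))
  have hval : ∀ x ∈ ({b, c, d} : Set (Fin n)), t (σ x) = 1 ∨ t (σ x) = 2 ∨ t (σ x) = 3 := by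
    intro x hx
    rcases hσ hx with h | h | h | h <;> simp [h, t, hb, hc, hd]
  have hta : t a = 0 := sub_self _
  have htb : t b = 1 := by simp [t, hb]
  have htc : t c = 2 := by simp [t, hc]
  have htd : t d = 3 := by simp [t, hd]
  have key := h t ht
  rw [ha, hta, htb, htc, htd] at key
  obtain ⟨h₁, h₂, h₃⟩ := eq_one_two_three_of_crossRatio_eq (hval b (by simp)) (hval c (by simp))
    (hval d (by simp)) key
  exact ⟨ht (h₁.trans htb.symm), ht (h₂.trans htc.symm), ht (h₃.trans htd.symm)⟩

end FixesCrossRatio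

lemma Set.mapsTo_of_mapsTo_insert_of_ne {α : Type*} {f : α → α} {s : Set α} {a a' : α}
    (ha : Set.MapsTo f (insert a s) (insert a s)) (ha' : Set.MapsTo f (insert a' s) (insert a' s))
    (hne : a ≠ a') : Set.MapsTo f s s := fun x hx => by
  rcases ha (Set.mem_insert_of_mem _ hx) with h | h
  · rcases ha' (Set.mem_insert_of_mem _ hx) with h' | h'
    · exact absurd (h.symm.trans h') hne
    · exact h'
  · exact h

lemma Equiv.Perm.apply_eq_self_of_mapsTo {α : Type*} {σ : Equiv.Perm α} {s : Set α}
    (hs : s.Finite) (hσs : Set.MapsTo σ s s) {a : α} (ha : a ∉ s) (hσa : σ a ∈ insert a s) :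
    σ a = a := by
  rcases hσa with h | h
  · exact h
  · obtain ⟨x, hx, hxa⟩ := ((hs.injOn_iff_bijOn_of_mapsTo hσs).mp σ.injective.injOn).surjOn h
    exact absurd (σ.injective hxa ▸ hx) ha

lemma fixesCrossRatio_of_ecrImage_eq {n M : ℕ} (hM : M + 4 ≤ n) {σ τ : Equiv.Perm (Fin n)}
    (h : ∀ q, GenPos q → ecrImage hM q (σ ∘ τ) = ecrImage hM q τ) :
    FixesCrossRatio σ (τ ⟨M, by omega⟩) (τ ⟨M + 1, by omega⟩) (τ ⟨M + 2, by omega⟩)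
      (τ ⟨M + 3, by omega⟩) := fun t ht => by
  have := h (momentCurve t) (genPos_momentCurve ht)
  rwa [ecrImage_momentCurve hM (ht.comp (σ.injective.comp τ.injective)),
    ecrImage_momentCurve hM (ht.comp τ.injective)] at this

/-- The paper's `m` is `K + 2` and indices are `0`-based: vertex `i` is the image of
`e_{(0,…,K);K+1,K+2,K+3,K+4}` under the transposition of `i` and `K + 1`. -/
theorem stabilizer_nabla_two {n K : ℕ} (hn : K + 5 ≤ n) (σ : Equiv.Perm (Fin n)) :
    (∀ i : Fin (K + 2),
      ∀ q : Fin n → Fin (K + 2) → ℂ, GenPos q →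
        ecr q (fun r : Fin (K + 1) =>
              σ (Equiv.swap (Fin.castLE (by omega) i) (⟨K + 1, by omega⟩ : Fin n)
                (Fin.castLE (by omega) r)))
            (σ (Equiv.swap (Fin.castLE (by omega) i) (⟨K + 1, by omega⟩ : Fin n)
                ⟨K + 1, by omega⟩))
            (σ (Equiv.swap (Fin.castLE (by omega) i) (⟨K + 1, by omega⟩ : Fin n)
                ⟨K + 2, by omega⟩))
            (σ (Equiv.swap (Fin.castLE (by omega) i) (⟨K + 1, by omega⟩ : Fin n)
                ⟨K + 3, by omega⟩))
            (σ (Equiv.swap (Fin.castLE (by omega) i) (⟨K + 1, by omega⟩ : Fin n)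
                ⟨K + 4, by omega⟩))
          = ecr q (fun r : Fin (K + 1) =>
              Equiv.swap (Fin.castLE (by omega) i) (⟨K + 1, by omega⟩ : Fin n)
                (Fin.castLE (by omega) r))
            (Equiv.swap (Fin.castLE (by omega) i) (⟨K + 1, by omega⟩ : Fin n)
                ⟨K + 1, by omega⟩)
            (Equiv.swap (Fin.castLE (by omega) i) (⟨K + 1, by omega⟩ : Fin n)
                ⟨K + 2, by omega⟩)
            (Equiv.swap (Fin.castLE (by omega) i) (⟨K + 1, by omega⟩ : Fin n)
                ⟨K + 3, by omega⟩)
            (Equiv.swap (Fin.castLE (by omega) i) (⟨K + 1, by omega⟩ : Fin n)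
                ⟨K + 4, by omega⟩)) ↔
      (∀ a : Fin n, a.val ≤ K + 4 → σ a = a) := by
  have hK : K + 2 ≤ n := by omega
  have hM : K + 1 + 4 ≤ n := by omega
  let τ : Fin (K + 2) → Equiv.Perm (Fin n) := fun i =>
    Equiv.swap (Fin.castLE hK i) ⟨K + 1, by omega⟩
  let b : Fin n := ⟨K + 2, by omega⟩
  let c : Fin n := ⟨K + 3, by omega⟩
  let d : Fin n := ⟨K + 4, by omega⟩
  change (∀ i, ∀ q, GenPos q → ecrImage hM q (σ ∘ τ i) = ecrImage hM q (τ i)) ↔ _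
  constructor
  · intro h
    have hτ : ∀ i (z : Fin n), K + 1 < z.val → τ i z = z := fun i z hz =>
      Equiv.swap_apply_of_ne_of_ne (Fin.ne_of_val_ne (by simp only [Fin.val_castLE]; omega))
        (Fin.ne_of_val_ne hz.ne')
    have hfix : ∀ i, FixesCrossRatio σ (Fin.castLE hK i) b c d := fun i => by
      convert fixesCrossRatio_of_ecrImage_eq hM (h i) using 1
      · exact (Equiv.swap_apply_right _ _).symm
      all_goals refine (hτ i _ ?_).symm; simp [b, c, d]
    have hmaps : ∀ i, Set.MapsTo σ {Fin.castLE hK i, b, c, d} {Fin.castLE hK i, b, c, d} := by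
      intro i
      refine (hfix i).mapsTo ?_ ?_ ?_ (by simp [b, c]) (by simp [b, d]) (by simp [c, d]) <;>
        simp only [ne_eq, Fin.ext_iff, Fin.val_castLE, b, c, d] <;> omega
    have hT : Set.MapsTo σ {b, c, d} {b, c, d} := Set.mapsTo_of_mapsTo_insert_of_ne (hmaps 0)
      (hmaps 1) ((Fin.castLE_injective hK).ne zero_ne_one)
    have hA : ∀ i, σ (Fin.castLE hK i) = Fin.castLE hK i := by
      intro i
      refine Equiv.Perm.apply_eq_self_of_mapsTo (Set.toFinite _) hT ?_ (hmaps i (by simp))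
      simp only [Set.mem_insert_iff, Set.mem_singleton_iff, Fin.ext_iff, Fin.val_castLE, b, c, d]
      omega
    obtain ⟨hb, hc, hd⟩ := (hfix (Fin.last _)).eq_of_consecutive rfl rfl rfl (hA _) hT
    intro a ha
    rcases lt_or_ge a.val (K + 2) with h | h
    · exact hA ⟨a, h⟩
    · obtain rfl | rfl | rfl : a = b ∨ a = c ∨ a = d := by
        simp only [Fin.ext_iff, b, c, d]; omega
      exacts [hb, hc, hd]
  · rintro h i q -
    refine ecrImage_congr hM q fun z hz => h _ ?_
    simp only [τ, Equiv.swap_apply_def]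
    split_ifs <;> grind
end
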